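/- arXiv:2412.15971 — 9 statements merged into one kernel-verified Lean document; each statement's English description precedes it below -/
import Mathlib

section
/- Let μ be a Borel measure on (0,∞), let μ̄ = δ₀ + μ be its augmentation by a unit point mass at 0, and let η' < η be real numbers. Then for every measurable function y : [0,∞) → ℝ and every t > 0, ∫_{[0,∞)} e^{-2tx} y(x)² (1+x)^η dμ̄(x) ≤ κ(η−η')² · (1 + t^{-(η−η')}) · ∫_{[0,∞)} y(x)² (1+x)^{η'} dμ̄(x), where κ(δ) = max{1, 2^{-δ/2} δ^{δ/2}}. In particular the multiplication semigroup S(t)y(x) = e^{-tx}y(x) maps the weighted L² space with weight (1+x)^{η'} dμ̄ into the one with weight (1+x)^{η} dμ̄, with operator norm at most κ(η−η')·(1 + t^{-(η−η')})^{1/2}. -/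
open Real MeasureTheory

/-!
Since `μ̄` lives on `[0,∞)` and `(1+x)^η = (1+x)^(η-η') (1+x)^η'`, it suffices to bound the
multiplier `e^{-2tx} (1+x)^δ`, `δ = η - η'`, uniformly in `x ≥ 0`. Writing `a = 2t(1+x)`, this is
`e^{2t} (2t)^{-δ} a^δ e^{-a} ≤ (δ/2t)^δ e^{2t-δ}` by maximizing `a^δ e^{-a}` at `a = δ`. When `δ ≤ 2t`
the multiplier is instead at most `1`, via `1 + x ≤ e^x`; when `2t < δ` the bound is at most
`(δ/2)^δ t^{-δ} ≤ κ(δ)² t^{-δ}`.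
-/

/-- `κ(δ) = max{1, 2^{-δ/2} δ^{δ/2}}`. -/
noncomputable def kappa (δ : ℝ) : ℝ := max 1 ((2 : ℝ) ^ (-(δ / 2)) * δ ^ (δ / 2))

lemma one_le_kappa_sq (δ : ℝ) : 1 ≤ kappa δ ^ 2 :=
  one_le_pow₀ (le_max_left _ _)

lemma half_rpow_self_le_kappa_sq {δ : ℝ} (hδ : 0 ≤ δ) : (δ / 2) ^ δ ≤ kappa δ ^ 2 := by
  have hsqrt : (δ / 2) ^ (δ / 2) = (2 : ℝ) ^ (-(δ / 2)) * δ ^ (δ / 2) := by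
    rw [div_rpow hδ zero_le_two, rpow_neg zero_le_two, div_eq_inv_mul]
  have hsq : (δ / 2) ^ δ = ((δ / 2) ^ (δ / 2)) ^ 2 := by
    rw [← rpow_natCast, ← rpow_mul (by positivity)]
    ring_nf
  rw [hsq, hsqrt]
  exact pow_le_pow_left₀ (by positivity) (le_max_right _ _) 2

lemma rpow_mul_exp_neg_le {δ a : ℝ} (hδ : 0 < δ) (ha : 0 ≤ a) :
    a ^ δ * exp (-a) ≤ δ ^ δ * exp (-δ) := by
  have hratio : (a / δ) ^ δ ≤ exp (a - δ) := by
    have hlin : a / δ ≤ exp (a / δ - 1) := by linarith [add_one_le_exp (a / δ - 1)]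
    calc (a / δ) ^ δ ≤ exp (a / δ - 1) ^ δ := rpow_le_rpow (by positivity) hlin hδ.le
      _ = exp (a - δ) := by rw [← exp_mul]; field_simp
  calc a ^ δ * exp (-a) = δ ^ δ * (a / δ) ^ δ * exp (-a) := by
        rw [← mul_rpow hδ.le (by positivity), mul_div_cancel₀ a hδ.ne']
    _ ≤ δ ^ δ * exp (a - δ) * exp (-a) := by gcongr
    _ = δ ^ δ * exp (-δ) := by rw [mul_assoc, ← exp_add]; ring_nf

lemma exp_neg_mul_mul_one_add_rpow_le {c δ x : ℝ} (hc : 0 < c) (hδ : 0 < δ) (hx : -1 ≤ x) :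
    exp (-(c * x)) * (1 + x) ^ δ ≤ (δ / c) ^ δ * exp (c - δ) := by
  have ha : 0 ≤ c * (1 + x) := by nlinarith
  have hshift : exp (-(c * x)) = exp c * exp (-(c * (1 + x))) := by rw [← exp_add]; ring_nf
  calc exp (-(c * x)) * (1 + x) ^ δ
      = exp c / c ^ δ * ((c * (1 + x)) ^ δ * exp (-(c * (1 + x)))) := by
        rw [hshift, mul_rpow hc.le (by linarith)]
        field_simp
    _ ≤ exp c / c ^ δ * (δ ^ δ * exp (-δ)) :=
        mul_le_mul_of_nonneg_left (rpow_mul_exp_neg_le hδ ha) (by positivity)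
    _ = (δ / c) ^ δ * exp (c - δ) := by
        rw [div_rpow hδ.le hc.le, sub_eq_add_neg, exp_add]; ring

lemma exp_neg_mul_mul_one_add_rpow_le_one {c δ x : ℝ} (hδ : 0 ≤ δ) (hδc : δ ≤ c) (hx : 0 ≤ x) :
    exp (-(c * x)) * (1 + x) ^ δ ≤ 1 := by
  have hpow : (1 + x) ^ δ ≤ exp (δ * x) := by
    calc (1 + x) ^ δ ≤ exp x ^ δ := by
          gcongr; linarith [add_one_le_exp x]
      _ = exp (δ * x) := by rw [← exp_mul, mul_comm]
  calc exp (-(c * x)) * (1 + x) ^ δ ≤ exp (-(c * x)) * exp (δ * x) := by gcongr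
    _ = exp ((δ - c) * x) := by rw [← exp_add]; ring_nf
    _ ≤ 1 := exp_le_one_iff.mpr (mul_nonpos_of_nonpos_of_nonneg (by linarith) hx)

lemma exp_neg_two_mul_mul_one_add_rpow_le {δ t x : ℝ} (hδ : 0 < δ) (ht : 0 < t) (hx : 0 ≤ x) :
    exp (-(2 * t * x)) * (1 + x) ^ δ ≤ kappa δ ^ 2 * (1 + t ^ (-δ)) := by
  have hκ := one_le_kappa_sq δ
  have ht_rpow : 0 ≤ t ^ (-δ) := rpow_nonneg ht.le _
  rcases le_or_gt δ (2 * t) with hsmall | hlarge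
  · calc exp (-(2 * t * x)) * (1 + x) ^ δ ≤ 1 :=
          exp_neg_mul_mul_one_add_rpow_le_one hδ.le hsmall hx
      _ ≤ kappa δ ^ 2 * (1 + t ^ (-δ)) := by nlinarith
  · have hsplit : (δ / (2 * t)) ^ δ = (δ / 2) ^ δ * t ^ (-δ) := by
      rw [← div_div, div_rpow (by positivity) ht.le, rpow_neg ht.le, div_eq_mul_inv]
    calc exp (-(2 * t * x)) * (1 + x) ^ δ ≤ (δ / (2 * t)) ^ δ * exp (2 * t - δ) :=
          exp_neg_mul_mul_one_add_rpow_le (by positivity) hδ (by linarith)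
      _ ≤ (δ / (2 * t)) ^ δ * 1 := by gcongr; exact exp_le_one_iff.mpr (by linarith)
      _ = (δ / 2) ^ δ * t ^ (-δ) := by rw [mul_one, hsplit]
      _ ≤ kappa δ ^ 2 * t ^ (-δ) := by gcongr; exact half_rpow_self_le_kappa_sq hδ.le
      _ ≤ kappa δ ^ 2 * (1 + t ^ (-δ)) := by nlinarith

lemma ae_nonneg_dirac_zero_add {μ : Measure ℝ} (hμ : μ (Set.Iic 0) = 0) :
    ∀ᵐ x ∂(Measure.dirac 0 + μ), 0 ≤ x := by
  refine ae_add_measure_iff.mpr ⟨?_, ?_⟩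
  · rw [ae_dirac_eq]; exact Filter.eventually_pure.mpr le_rfl
  · filter_upwards [measure_eq_zero_iff_ae_notMem.mp hμ] with x hx
    exact (lt_of_not_ge hx).le

theorem semigroup_smoothing_general (μ : Measure ℝ) (hμ : μ (Set.Iic 0) = 0)
    (η' η : ℝ) (hηη : η' < η) (y : ℝ → ℝ) (t : ℝ) (ht : 0 < t) :
    ∫⁻ x, ENNReal.ofReal (Real.exp (-(2 * t * x)) * y x ^ 2 * (1 + x) ^ η)
        ∂(Measure.dirac 0 + μ)
      ≤ ENNReal.ofReal (kappa (η - η') ^ 2 * (1 + t ^ (-(η - η')))) *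
        ∫⁻ x, ENNReal.ofReal (y x ^ 2 * (1 + x) ^ η') ∂(Measure.dirac 0 + μ) := by
  have hδ : 0 < η - η' := sub_pos.mpr hηη
  rw [← lintegral_const_mul' _ _ ENNReal.ofReal_ne_top]
  refine lintegral_mono_ae ?_
  filter_upwards [ae_nonneg_dirac_zero_add hμ] with x hx
  have hweight : (1 + x) ^ η = (1 + x) ^ (η - η') * (1 + x) ^ η' := by
    rw [← rpow_add (by linarith), sub_add_cancel]
  rw [← ENNReal.ofReal_mul (by positivity), hweight]
  refine ENNReal.ofReal_le_ofReal ?_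
  calc exp (-(2 * t * x)) * y x ^ 2 * ((1 + x) ^ (η - η') * (1 + x) ^ η')
      = (exp (-(2 * t * x)) * (1 + x) ^ (η - η')) * (y x ^ 2 * (1 + x) ^ η') := by ring
    _ ≤ kappa (η - η') ^ 2 * (1 + t ^ (-(η - η'))) * (y x ^ 2 * (1 + x) ^ η') :=
        mul_le_mul_of_nonneg_right (exp_neg_two_mul_mul_one_add_rpow_le hδ ht hx)
          (by positivity)

/-- Let `μ` be a Borel measure on `(0,∞)` (modelled as a measure on `ℝ` vanishing on
`(-∞,0]`), let `μ̄ = δ₀ + μ` be its augmentation by a unit point mass at `0`, and let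
`η' < η`. Then for every measurable `y : ℝ → ℝ` and every `t > 0`,
`∫ e^{-2tx} y(x)² (1+x)^η dμ̄ ≤ κ(η−η')² (1 + t^{-(η−η')}) ∫ y(x)² (1+x)^{η'} dμ̄`. -/
theorem semigroup_smoothing (μ : Measure ℝ) (hμ : μ (Set.Iic 0) = 0)
    (η' η : ℝ) (hηη : η' < η) (y : ℝ → ℝ) (hy : Measurable y) (t : ℝ) (ht : 0 < t) :
    ∫⁻ x, ENNReal.ofReal (Real.exp (-(2 * t * x)) * y x ^ 2 * (1 + x) ^ η)
        ∂(Measure.dirac 0 + μ)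
      ≤ ENNReal.ofReal (kappa (η - η') ^ 2 * (1 + t ^ (-(η - η')))) *
        ∫⁻ x, ENNReal.ofReal (y x ^ 2 * (1 + x) ^ η') ∂(Measure.dirac 0 + μ) :=
  semigroup_smoothing_general μ hμ η' η hηη y t ht
end

section
/- Let μ be a Borel measure on (0,∞) with ∫_{(0,∞)} e^{-xr} dμ(x) < ∞ for every r > 0, let c₀ ≥ 0, and let K(r) = c₀ + ∫_{(0,∞)} e^{-xr} dμ(x). Then for every h > 0, ∫_0^h K(r)² dr ≥ (1 − e^{-1})² · h · μ((0, 1/h])². -/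
/-!
Put `A = (0, 1/h]` and `g(r) = ∫_A e^{-xr} dμ(x)`, so that `0 ≤ g ≤ K` on `(0, h]`.
By Tonelli, `∫_0^h g = ∫_A (1 - e^{-xh}) / x dμ(x)`, and concavity of `t ↦ 1 - e^{-t}` gives
`(1 - e^{-t}) / t ≥ 1 - e^{-1}` for `t = xh ≤ 1`; hence the mean of `g` over `(0, h]` is at least
`(1 - e^{-1}) μ(A)`. Cauchy–Schwarz turns this into the same bound, squared, for the mean of `g²`.
-/

open Real MeasureTheory Set
open scoped ENNReal

theorem sq_lintegral_le_measure_univ_mul_lintegral_sq {α : Type*} [MeasurableSpace α]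
    (ν : Measure α) {f : α → ℝ≥0∞} (hf : AEMeasurable f ν) :
    (∫⁻ a, f a ∂ν) ^ 2 ≤ ν univ * ∫⁻ a, f a ^ 2 ∂ν := by
  have hCS := ENNReal.lintegral_mul_le_Lp_mul_Lq ν Real.HolderConjugate.two_two hf
    aemeasurable_const (g := fun _ => 1)
  simp only [Pi.mul_apply, mul_one, ENNReal.one_rpow, lintegral_one] at hCS
  calc (∫⁻ a, f a ∂ν) ^ 2
      ≤ ((∫⁻ a, f a ^ (2 : ℝ) ∂ν) ^ (1 / (2 : ℝ)) * ν univ ^ (1 / (2 : ℝ))) ^ 2 :=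
        pow_le_pow_left₀ zero_le hCS 2
    _ = ν univ * ∫⁻ a, f a ^ 2 ∂ν := by
        rw [mul_pow, ← ENNReal.rpow_natCast _ 2, ← ENNReal.rpow_natCast _ 2,
          ← ENNReal.rpow_mul, ← ENNReal.rpow_mul]
        norm_num [mul_comm]

theorem measure_mul_sq_le_setLIntegral_sq {α : Type*} [MeasurableSpace α] {ν : Measure α}
    {s : Set α} {f : α → ℝ≥0∞} (hf : AEMeasurable f (ν.restrict s)) (hs : ν s ≠ ∞)
    {c : ℝ≥0∞} (hc : ν s * c ≤ ∫⁻ a in s, f a ∂ν) :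
    ν s * c ^ 2 ≤ ∫⁻ a in s, f a ^ 2 ∂ν := by
  rcases eq_or_ne (ν s) 0 with hs₀ | hs₀
  · simp [hs₀]
  have hCS := sq_lintegral_le_measure_univ_mul_lintegral_sq (ν.restrict s) hf
  rw [Measure.restrict_apply_univ] at hCS
  refine (ENNReal.mul_le_mul_iff_right hs₀ hs).mp ?_
  calc ν s * (ν s * c ^ 2) = (ν s * c) ^ 2 := by ring
    _ ≤ (∫⁻ a in s, f a ∂ν) ^ 2 := pow_le_pow_left₀ zero_le hc 2
    _ ≤ ν s * ∫⁻ a in s, f a ^ 2 ∂ν := hCS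

theorem mul_one_sub_exp_neg_one_le_one_sub_exp_neg {t : ℝ} (ht₀ : 0 ≤ t) (ht₁ : t ≤ 1) :
    t * (1 - exp (-1)) ≤ 1 - exp (-t) := by
  have hconv := convexOn_exp.2 (mem_univ (0 : ℝ)) (mem_univ (-1 : ℝ))
    (by linarith : (0 : ℝ) ≤ 1 - t) ht₀ (by ring)
  simp only [smul_eq_mul, mul_zero, mul_neg, mul_one, zero_add, exp_zero] at hconv
  linarith

theorem integral_Ioc_exp_neg_mul {x : ℝ} (hx : x ≠ 0) {h : ℝ} (hh : 0 ≤ h) :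
    ∫ r in Ioc 0 h, exp (-(x * r)) = (1 - exp (-(x * h))) / x := by
  rw [← intervalIntegral.integral_of_le hh]
  simp_rw [← neg_mul]
  rw [intervalIntegral.integral_comp_mul_left exp (neg_ne_zero.2 hx), integral_exp,
    mul_zero, exp_zero, smul_eq_mul]
  field_simp
  ring

theorem mul_one_sub_exp_neg_one_le_integral_Ioc_exp_neg_mul {x h : ℝ} (hx : 0 < x)
    (hh : 0 ≤ h) (hxh : x * h ≤ 1) :
    h * (1 - exp (-1)) ≤ ∫ r in Ioc 0 h, exp (-(x * r)) := by
  rw [integral_Ioc_exp_neg_mul hx.ne' hh, le_div_iff₀ hx]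
  calc h * (1 - exp (-1)) * x = (x * h) * (1 - exp (-1)) := by ring
    _ ≤ 1 - exp (-(x * h)) :=
      mul_one_sub_exp_neg_one_le_one_sub_exp_neg (mul_nonneg hx.le hh) hxh

theorem measure_Ioc_one_div_lt_top {μ : Measure ℝ} {h : ℝ} (hh : 0 < h)
    (hint : IntegrableOn (fun x => exp (-(x * h))) (Ioi 0) μ) :
    μ (Ioc 0 (1 / h)) < ∞ := by
  have hint' : IntegrableOn (fun x => exp (-(x * h))) (Ioc 0 (1 / h)) μ :=
    hint.mono_set Ioc_subset_Ioi_self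
  rw [← Measure.restrict_apply_self]
  refine (measure_mono fun x hx => ?_).trans_lt (hint'.measure_ge_lt_top (exp_pos (-1)))
  exact exp_le_exp.2 (neg_le_neg ((le_div_iff₀ hh).1 hx.2))

theorem volume_Ioc_mul_measure_univ_le_lintegral_Ioc_laplace {ν : Measure ℝ} [SFinite ν] {h : ℝ}
    (hh : 0 < h) (hν : ∀ᵐ x ∂ν, x ∈ Ioc 0 (1 / h)) :
    volume (Ioc 0 h) * (ENNReal.ofReal (1 - exp (-1)) * ν univ) ≤
      ∫⁻ r in Ioc 0 h, ∫⁻ x, ENNReal.ofReal (exp (-(x * r))) ∂ν := by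
  have hmeas : Measurable fun p : ℝ × ℝ => ENNReal.ofReal (exp (-(p.2 * p.1))) := by fun_prop
  rw [lintegral_lintegral_swap hmeas.aemeasurable, Real.volume_Ioc, sub_zero, ← mul_assoc,
    ← ENNReal.ofReal_mul hh.le, ← lintegral_const]
  refine lintegral_mono_ae (hν.mono fun x hx => ?_)
  have hxh : x * h ≤ 1 := (le_div_iff₀ hh).1 hx.2
  have hint : IntegrableOn (fun r => exp (-(x * r))) (Ioc 0 h) :=
    (by fun_prop : Continuous fun r => exp (-(x * r))).integrableOn_Ioc
  rw [← ofReal_integral_eq_lintegral_ofReal hint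
    (ae_of_all _ fun r => (exp_pos _).le)]
  exact ENNReal.ofReal_le_ofReal
    (mul_one_sub_exp_neg_one_le_integral_Ioc_exp_neg_mul hx.1 hh.le hxh)

theorem sq_setLIntegral_ofReal_le_ofReal_sq_add_integral {α : Type*} [MeasurableSpace α]
    {μ : Measure α} {s t : Set α} {f : α → ℝ} (hst : s ⊆ t) (hf : IntegrableOn f t μ)
    (hf₀ : ∀ x, 0 ≤ f x) {c : ℝ} (hc : 0 ≤ c) :
    (∫⁻ x in s, ENNReal.ofReal (f x) ∂μ) ^ 2 ≤ ENNReal.ofReal ((c + ∫ x in t, f x ∂μ) ^ 2) := by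
  have hI : 0 ≤ ∫ x in t, f x ∂μ := integral_nonneg hf₀
  rw [ENNReal.ofReal_pow (by positivity)]
  refine pow_le_pow_left₀ zero_le ?_ 2
  calc ∫⁻ x in s, ENNReal.ofReal (f x) ∂μ ≤ ∫⁻ x in t, ENNReal.ofReal (f x) ∂μ :=
        lintegral_mono_set hst
    _ = ENNReal.ofReal (∫ x in t, f x ∂μ) :=
        (ofReal_integral_eq_lintegral_ofReal hf (ae_of_all _ hf₀)).symm
    _ ≤ ENNReal.ofReal (c + ∫ x in t, f x ∂μ) := ENNReal.ofReal_le_ofReal (by linarith)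

/-- Let `μ` be a Borel measure on `(0,∞)` with `∫ e^{-xr} dμ < ∞` for every `r > 0`,
`c₀ ≥ 0`, and `K(r) = c₀ + ∫ e^{-xr} dμ`. Then for every `h > 0`,
`∫_0^h K(r)² dr ≥ (1 − e^{-1})² · h · μ((0, 1/h])²`. -/
theorem kernel_L2_lower_bound (μ : Measure ℝ) (c₀ : ℝ) (hc₀ : 0 ≤ c₀)
    (hint : ∀ r : ℝ, 0 < r → IntegrableOn (fun x => Real.exp (-(x * r))) (Set.Ioi 0) μ)
    (K : ℝ → ℝ) (hK : ∀ r : ℝ, 0 < r → K r = c₀ + ∫ x in Set.Ioi 0, Real.exp (-(x * r)) ∂μ)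
    (h : ℝ) (hh : 0 < h) :
    ENNReal.ofReal ((1 - Real.exp (-1)) ^ 2 * h) * μ (Set.Ioc 0 (1 / h)) ^ 2 ≤
      ∫⁻ r in Set.Ioc 0 h, ENNReal.ofReal (K r ^ 2) := by
  set A := Ioc (0 : ℝ) (1 / h)
  have : IsFiniteMeasure (μ.restrict A) :=
    isFiniteMeasure_restrict.2 (measure_Ioc_one_div_lt_top hh (hint h hh)).ne
  set g : ℝ → ℝ≥0∞ := fun r => ∫⁻ x in A, ENNReal.ofReal (exp (-(x * r))) ∂μ
  have hg : Measurable g :=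
    Measurable.lintegral_prod_left (by fun_prop : Measurable fun p : ℝ × ℝ =>
      ENNReal.ofReal (exp (-(p.1 * p.2))))
  have hgK : ∀ r ∈ Ioc 0 h, g r ^ 2 ≤ ENNReal.ofReal (K r ^ 2) := fun r hr => by
    rw [hK r hr.1]
    exact sq_setLIntegral_ofReal_le_ofReal_sq_add_integral Ioc_subset_Ioi_self (hint r hr.1)
      (fun x => (exp_pos _).le) hc₀
  have hmean := volume_Ioc_mul_measure_univ_le_lintegral_Ioc_laplace hh
    (ae_restrict_mem (μ := μ) measurableSet_Ioc)
  rw [Measure.restrict_apply_univ] at hmean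
  calc ENNReal.ofReal ((1 - exp (-1)) ^ 2 * h) * μ A ^ 2
      = volume (Ioc 0 h) * (ENNReal.ofReal (1 - exp (-1)) * μ A) ^ 2 := by
        rw [Real.volume_Ioc, sub_zero, ENNReal.ofReal_mul (sq_nonneg _),
          ENNReal.ofReal_pow (sub_nonneg.2 (exp_le_one_iff.2 (by norm_num)))]
        ring
    _ ≤ ∫⁻ r in Ioc 0 h, g r ^ 2 :=
        measure_mul_sq_le_setLIntegral_sq hg.aemeasurable measure_Ioc_lt_top.ne hmean
    _ ≤ ∫⁻ r in Ioc 0 h, ENNReal.ofReal (K r ^ 2) := setLIntegral_mono' measurableSet_Ioc hgK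
end

section
/- Let μ be a Borel measure on (0,∞), c₀ ≥ 0, and K(r) = c₀ + ∫_{(0,∞)} e^{-xr} dμ(x). Suppose η ∈ [0, 1/2) satisfies ∫_{(0,∞)} (1+x)^{-η} dμ(x) < ∞. Then for every T > 0 there exist constants C₁, C₂ > 0 such that K(r) ≤ C₁ r^{-η} for all r ∈ (0,T], and ∫_0^h K(r)² dr ≤ C₂ h^{1−2η} for all h ∈ (0, T]. -/
open Real MeasureTheory Set

/-!
From `e^{-t} ≤ t^{-η}` (for `t > 0`, `0 ≤ η ≤ 1`) one gets `e^{-xr} ≤ e^T (1+x)^{-η} r^{-η}` for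
`0 < r ≤ T`, and integrating in `μ` gives `K(r) ≤ C₁ r^{-η}`. Squaring, the bound `r^{-2η}` is
integrable near `0` because `2η < 1`, and its integral over `(0,h]` is `h^{1-2η}/(1-2η)`.
-/

lemma exp_neg_le_rpow_neg {η : ℝ} (hη0 : 0 ≤ η) (hη1 : η ≤ 1) {t : ℝ} (ht : 0 < t) :
    exp (-t) ≤ t ^ (-η) := by
  have h : t ^ η ≤ exp t := by
    rcases le_total t 1 with h | h
    · exact (rpow_le_one ht.le h hη0).trans (one_le_exp ht.le)
    · calc t ^ η ≤ t ^ (1 : ℝ) := rpow_le_rpow_of_exponent_le h hη1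
        _ = t := rpow_one t
        _ ≤ exp t := by linarith [add_one_le_exp t]
  rw [rpow_neg ht.le, exp_neg]
  exact inv_anti₀ (rpow_pos_of_pos ht η) h

lemma exp_neg_mul_le_rpow_neg {η : ℝ} (hη0 : 0 ≤ η) (hη1 : η ≤ 1) {x r T : ℝ}
    (hx : -1 < x) (hr : 0 < r) (hrT : r ≤ T) :
    exp (-(x * r)) ≤ exp T * (1 + x) ^ (-η) * r ^ (-η) := by
  have h1x : 0 < 1 + x := by linarith
  calc exp (-(x * r)) = exp r * exp (-((1 + x) * r)) := by rw [← exp_add]; ring_nf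
    _ ≤ exp T * ((1 + x) * r) ^ (-η) :=
        mul_le_mul (exp_le_exp.mpr hrT) (exp_neg_le_rpow_neg hη0 hη1 (by positivity))
          (exp_pos _).le (exp_pos _).le
    _ = exp T * (1 + x) ^ (-η) * r ^ (-η) := by rw [mul_rpow h1x.le hr.le, mul_assoc]

lemma setIntegral_exp_neg_mul_le {μ : Measure ℝ} {η : ℝ} (hη0 : 0 ≤ η) (hη1 : η ≤ 1)
    (hint : IntegrableOn (fun x => (1 + x) ^ (-η)) (Ioi 0) μ) {r T : ℝ} (hr : 0 < r)
    (hrT : r ≤ T) :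
    ∫ x in Ioi 0, exp (-(x * r)) ∂μ ≤
      exp T * (∫ x in Ioi 0, (1 + x) ^ (-η) ∂μ) * r ^ (-η) := by
  rw [← integral_const_mul, ← integral_mul_const]
  refine integral_mono_of_nonneg (Filter.Eventually.of_forall fun x => (exp_pos _).le)
    ((hint.const_mul _).mul_const _) ?_
  filter_upwards [ae_restrict_mem measurableSet_Ioi] with x hx
  exact exp_neg_mul_le_rpow_neg hη0 hη1 (by linarith [mem_Ioi.mp hx]) hr hrT

lemma le_mul_rpow_neg_of_le {c η r T : ℝ} (hc : 0 ≤ c) (hη0 : 0 ≤ η) (hr : 0 < r)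
    (hrT : r ≤ T) : c ≤ c * T ^ η * r ^ (-η) := by
  have h1 : r ^ η ≤ T ^ η := rpow_le_rpow hr.le hrT hη0
  have h2 : r ^ η * r ^ (-η) = 1 := by rw [← rpow_add hr]; simp
  have h3 : 1 ≤ T ^ η * r ^ (-η) := by nlinarith [rpow_pos_of_pos hr (-η)]
  nlinarith

lemma lintegral_Ioc_ofReal_rpow {a h : ℝ} (ha : -1 < a) (hh : 0 ≤ h) :
    ∫⁻ r in Ioc 0 h, ENNReal.ofReal (r ^ a) = ENNReal.ofReal (h ^ (a + 1) / (a + 1)) := by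
  have hint : IntegrableOn (fun r : ℝ => r ^ a) (Ioc 0 h) := by
    rw [← intervalIntegrable_iff_integrableOn_Ioc_of_le hh]
    exact intervalIntegral.intervalIntegrable_rpow' ha
  rw [← ofReal_integral_eq_lintegral_ofReal hint, ← intervalIntegral.integral_of_le hh,
    integral_rpow (Or.inl ha), zero_rpow (by linarith), sub_zero]
  filter_upwards [ae_restrict_mem measurableSet_Ioc] with r hr
  exact rpow_nonneg hr.1.le a

lemma lintegral_Ioc_ofReal_sq_le {f : ℝ → ℝ} {C η h : ℝ} (hη : η < 1 / 2) (hh : 0 ≤ h)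
    (hf0 : ∀ r ∈ Ioc 0 h, 0 ≤ f r) (hf : ∀ r ∈ Ioc 0 h, f r ≤ C * r ^ (-η)) :
    ∫⁻ r in Ioc 0 h, ENNReal.ofReal (f r ^ 2) ≤
      ENNReal.ofReal (C ^ 2 / (1 - 2 * η) * h ^ (1 - 2 * η)) := by
  have hsq : ∀ r ∈ Ioc 0 h, f r ^ 2 ≤ C ^ 2 * r ^ (-2 * η) := fun r hr => by
    have hpow : (r ^ (-η)) ^ 2 = r ^ (-2 * η) := by
      rw [← rpow_natCast, ← rpow_mul hr.1.le]; ring_nf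
    calc f r ^ 2 ≤ (C * r ^ (-η)) ^ 2 := pow_le_pow_left₀ (hf0 r hr) (hf r hr) 2
      _ = C ^ 2 * r ^ (-2 * η) := by rw [mul_pow, hpow]
  calc ∫⁻ r in Ioc 0 h, ENNReal.ofReal (f r ^ 2)
      ≤ ∫⁻ r in Ioc 0 h, ENNReal.ofReal (C ^ 2) * ENNReal.ofReal (r ^ (-2 * η)) := by
        refine setLIntegral_mono' measurableSet_Ioc fun r hr => ?_
        rw [← ENNReal.ofReal_mul (sq_nonneg C)]
        exact ENNReal.ofReal_le_ofReal (hsq r hr)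
    _ = ENNReal.ofReal (C ^ 2 / (1 - 2 * η) * h ^ (1 - 2 * η)) := by
        rw [lintegral_const_mul' _ _ ENNReal.ofReal_ne_top,
          lintegral_Ioc_ofReal_rpow (by linarith) hh, ← ENNReal.ofReal_mul (sq_nonneg C)]
        congr 1
        rw [show -2 * η + 1 = 1 - 2 * η by ring]
        ring

/-- Let `μ` be a Borel measure on `(0,∞)`, `c₀ ≥ 0`, `K(r) = c₀ + ∫ e^{-xr} dμ`, and
suppose `η ∈ [0,1/2)` satisfies `∫ (1+x)^{-η} dμ < ∞`. Then for every `T > 0` there are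
`C₁, C₂ > 0` with `K(r) ≤ C₁ r^{-η}` and `∫_0^h K(r)² dr ≤ C₂ h^{1−2η}` on `(0,T]`. -/
theorem kernel_L2_upper_bound (μ : Measure ℝ) (c₀ : ℝ) (hc₀ : 0 ≤ c₀)
    (η : ℝ) (hη0 : 0 ≤ η) (hη : η < 1 / 2)
    (hint : IntegrableOn (fun x => (1 + x) ^ (-η)) (Set.Ioi 0) μ)
    (K : ℝ → ℝ) (hK : ∀ r : ℝ, 0 < r → K r = c₀ + ∫ x in Set.Ioi 0, Real.exp (-(x * r)) ∂μ)
    (T : ℝ) (hT : 0 < T) :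
    ∃ C₁ : ℝ, 0 < C₁ ∧ ∃ C₂ : ℝ, 0 < C₂ ∧
      (∀ r ∈ Set.Ioc (0 : ℝ) T, K r ≤ C₁ * r ^ (-η)) ∧
      ∀ h ∈ Set.Ioc (0 : ℝ) T,
        ∫⁻ r in Set.Ioc 0 h, ENNReal.ofReal (K r ^ 2) ≤
          ENNReal.ofReal (C₂ * h ^ (1 - 2 * η)) := by
  set I := ∫ x in Ioi 0, (1 + x) ^ (-η) ∂μ
  have hI : 0 ≤ I := setIntegral_nonneg measurableSet_Ioi fun x hx =>
    rpow_nonneg (by linarith [mem_Ioi.mp hx]) _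
  set C₁ := c₀ * T ^ η + exp T * I + 1
  have hK_le : ∀ r ∈ Ioc 0 T, K r ≤ C₁ * r ^ (-η) := by
    rintro r ⟨hr, hrT⟩
    have hc := le_mul_rpow_neg_of_le hc₀ hη0 hr hrT
    have hL := setIntegral_exp_neg_mul_le hη0 (by linarith) hint hr hrT
    have := rpow_pos_of_pos hr (-η)
    rw [hK r hr]
    nlinarith
  have hK_nonneg : ∀ r, 0 < r → 0 ≤ K r := fun r hr => by
    rw [hK r hr]
    exact add_nonneg hc₀ (integral_nonneg fun x => (exp_pos _).le)
  refine ⟨C₁, by positivity, C₁ ^ 2 / (1 - 2 * η), div_pos (by positivity) (by linarith),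
    hK_le, fun h ⟨hh, hhT⟩ => ?_⟩
  exact lintegral_Ioc_ofReal_sq_le hη hh.le (fun r hr => hK_nonneg r hr.1)
    fun r hr => hK_le r ⟨hr.1, hr.2.trans hhT⟩
end

section
/- Let μ be a Borel measure on (0,∞), c₀ ≥ 0, and K(r) = c₀ + ∫_{(0,∞)} e^{-xr} dμ(x). Suppose η ∈ [0, 1/2) satisfies ∫_{(0,∞)} (1+x)^{-η} dμ(x) < ∞. Then for every T > 0 there exists a constant C > 0 such that ∫_0^T (K(h + r) − K(r))² dr ≤ C h^{1−2η} for every h ∈ (0, T]. -/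
/-!
Since `K r - K (h + r) = ∫ e^{-xr} (1 - e^{-xh}) dμ(x)`, Cauchy–Schwarz against the weight
`w x = (1 + x)^{-η}` gives `(K (h + r) - K r)² ≤ (∫ w dμ) · ∫ e^{-2xr} (1 - e^{-xh})² / w dμ`.
Integrating in `r` first (Tonelli; `μ` is σ-finite on `(0, ∞)` because it integrates the positive
function `w`), `∫₀ᵀ e^{-2xr} dr ≤ min T (1/(2x)) ≤ (T + 1/2) / (1 + x)`, while
`(1 - e^{-xh})² ≤ (xh)^{1-2η} ≤ ((1 + x) h)^{1-2η}`; together these bound the `x`-integrand by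
`(T + 1/2) h^{1-2η} w x`.
-/

open Real MeasureTheory Set
open scoped ENNReal

namespace MeasureTheory

variable {α : Type*} [MeasurableSpace α] {ν : Measure α}

theorem sq_lintegral_mul_le {f g : α → ℝ≥0∞} (hf : AEMeasurable f ν) (hg : AEMeasurable g ν) :
    (∫⁻ x, f x * g x ∂ν) ^ 2 ≤ (∫⁻ x, f x ^ 2 ∂ν) * ∫⁻ x, g x ^ 2 ∂ν := by
  have hsq (a : ℝ≥0∞) : (a ^ (1 / 2 : ℝ)) ^ 2 = a := by
    rw [← ENNReal.rpow_natCast, ← ENNReal.rpow_mul]; norm_num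
  have := ENNReal.lintegral_mul_le_Lp_mul_Lq ν Real.HolderConjugate.two_two hf hg
  simp only [Pi.mul_apply, ENNReal.rpow_two] at this
  calc (∫⁻ x, f x * g x ∂ν) ^ 2
      ≤ ((∫⁻ x, f x ^ 2 ∂ν) ^ (1 / 2 : ℝ) * (∫⁻ x, g x ^ 2 ∂ν) ^ (1 / 2 : ℝ)) ^ 2 := by
        gcongr
    _ = _ := by rw [mul_pow, hsq, hsq]

theorem sq_lintegral_ofReal_le_mul_lintegral_sq_div {f w : α → ℝ} (hf : AEMeasurable f ν)
    (hw : AEMeasurable w ν) (hw₀ : ∀ᵐ x ∂ν, 0 < w x) :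
    (∫⁻ x, ENNReal.ofReal (f x) ∂ν) ^ 2 ≤
      (∫⁻ x, ENNReal.ofReal (w x) ∂ν) * ∫⁻ x, ENNReal.ofReal (f x ^ 2 / w x) ∂ν := by
  have hsplit : ∀ᵐ x ∂ν, ENNReal.ofReal (f x) =
      ENNReal.ofReal √(w x) * ENNReal.ofReal (f x / √(w x)) := by
    filter_upwards [hw₀] with x hx
    rw [← ENNReal.ofReal_mul (Real.sqrt_nonneg _), mul_div_cancel₀ _ (by positivity)]
  have hleft : ∀ᵐ x ∂ν, ENNReal.ofReal √(w x) ^ 2 = ENNReal.ofReal (w x) := by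
    filter_upwards [hw₀] with x hx
    rw [← ENNReal.ofReal_pow (Real.sqrt_nonneg _), Real.sq_sqrt hx.le]
  have hright : ∀ᵐ x ∂ν,
      ENNReal.ofReal (f x / √(w x)) ^ 2 ≤ ENNReal.ofReal (f x ^ 2 / w x) := by
    filter_upwards [hw₀] with x hx
    rcases le_total 0 (f x / √(w x)) with hpos | hneg
    · rw [← ENNReal.ofReal_pow hpos, div_pow, Real.sq_sqrt hx.le]
    · simp [ENNReal.ofReal_of_nonpos hneg]
  calc (∫⁻ x, ENNReal.ofReal (f x) ∂ν) ^ 2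
      = (∫⁻ x, ENNReal.ofReal √(w x) * ENNReal.ofReal (f x / √(w x)) ∂ν) ^ 2 := by
        rw [lintegral_congr_ae hsplit]
    _ ≤ (∫⁻ x, ENNReal.ofReal √(w x) ^ 2 ∂ν) * ∫⁻ x, ENNReal.ofReal (f x / √(w x)) ^ 2 ∂ν :=
        sq_lintegral_mul_le (by fun_prop) (by fun_prop)
    _ ≤ _ := by
        rw [lintegral_congr_ae hleft]
        exact mul_le_mul_right (lintegral_mono_ae hright) _

theorem sigmaFinite_of_lintegral_ne_top {w : α → ℝ≥0∞} (hw : AEMeasurable w ν)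
    (hw₀ : ∀ᵐ x ∂ν, w x ≠ 0) (hw_int : ∫⁻ x, w x ∂ν ≠ ∞) : SigmaFinite ν := by
  have : IsFiniteMeasure (ν.withDensity w) := isFiniteMeasure_withDensity hw_int
  rw [← withDensity_inv_same₀ hw hw₀ ((ae_lt_top' hw hw_int).mono fun _ hx => hx.ne)]
  exact SigmaFinite.withDensity_of_ne_top
    (withDensity_absolutelyContinuous _ _ (hw₀.mono fun _ hx => ENNReal.inv_ne_top.2 hx))

end MeasureTheory

namespace Real

theorem one_sub_exp_neg_sq_le_rpow {u s : ℝ} (hu : 0 ≤ u) (hs₀ : 0 ≤ s) (hs₂ : s ≤ 2) :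
    (1 - exp (-u)) ^ 2 ≤ u ^ s := by
  have hle_u : 1 - exp (-u) ≤ u := by linarith [add_one_le_exp (-u)]
  have hle_one : 1 - exp (-u) ≤ 1 := by linarith [exp_pos (-u)]
  have hnonneg : 0 ≤ 1 - exp (-u) := by linarith [exp_le_one_iff.2 (neg_nonpos.2 hu)]
  rcases le_total u 1 with hu1 | hu1
  · calc (1 - exp (-u)) ^ 2 ≤ u ^ (2 : ℝ) := by rw [rpow_two]; gcongr
      _ ≤ u ^ s := rpow_le_rpow_of_exponent_ge' hu hu1 hs₀ hs₂
  · calc (1 - exp (-u)) ^ 2 ≤ 1 := pow_le_one₀ hnonneg hle_one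
      _ ≤ u ^ s := one_le_rpow hu1 hs₀

theorem exp_neg_mul_le_inv_mul_inv_one_add {r x : ℝ} (hr : 0 < r) (hx : 0 ≤ x) :
    exp (-(x * r)) ≤ (min r 1)⁻¹ * (1 + x)⁻¹ := by
  have hmin : min r 1 * (1 + x) ≤ exp (x * r) := by
    have := add_one_le_exp (x * r)
    nlinarith [min_le_left r 1, min_le_right r 1]
  rw [exp_neg, ← mul_inv]
  exact inv_anti₀ (by positivity) hmin

theorem exp_neg_mul_sub_exp_neg_mul_add (x r h : ℝ) :
    exp (-(x * r)) - exp (-(x * (h + r))) = exp (-(x * r)) * (1 - exp (-(x * h))) := by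
  rw [mul_one_sub, ← exp_add]
  ring_nf

theorem one_sub_exp_neg_mul_sq_div_le {η x h : ℝ} (hη₀ : -(1 / 2) ≤ η) (hη₁ : η ≤ 1 / 2)
    (hx : 0 ≤ x) (hh : 0 ≤ h) :
    (1 - exp (-(x * h))) ^ 2 / (1 + x) ^ (-η) / (1 + x) ≤ h ^ (1 - 2 * η) * (1 + x) ^ (-η) := by
  have h1x : 0 < 1 + x := by linarith
  have hweight : (1 + x) ^ (-η) * (1 + x) ^ (-η) * (1 + x) = (1 + x) ^ (1 - 2 * η) := by
    rw [← rpow_add h1x, ← rpow_add_one h1x.ne']; ring_nf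
  rw [div_div, div_le_iff₀ (by positivity), mul_assoc, ← mul_assoc ((1 + x) ^ (-η)), hweight,
    ← mul_rpow hh h1x.le]
  calc (1 - exp (-(x * h))) ^ 2 ≤ (x * h) ^ (1 - 2 * η) :=
        one_sub_exp_neg_sq_le_rpow (by positivity) (by linarith) (by linarith)
    _ ≤ (h * (1 + x)) ^ (1 - 2 * η) := by
        rw [mul_comm x]
        gcongr <;> linarith

end Real

theorem lintegral_Ioc_exp_neg_mul_le_min {a T : ℝ} (ha : 0 < a) :
    ∫⁻ r in Ioc 0 T, ENNReal.ofReal (exp (-(a * r))) ≤ ENNReal.ofReal (min T a⁻¹) := by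
  rw [ENNReal.ofReal_min]
  refine le_min ?_ ?_
  · calc ∫⁻ r in Ioc 0 T, ENNReal.ofReal (exp (-(a * r)))
        ≤ ∫⁻ _ in Ioc 0 T, 1 := by
          refine setLIntegral_mono measurable_const fun r hr => ?_
          exact ENNReal.ofReal_le_one.2 (exp_le_one_iff.2 (by nlinarith [hr.1]))
      _ = ENNReal.ofReal T := by simp
  · calc ∫⁻ r in Ioc 0 T, ENNReal.ofReal (exp (-(a * r)))
        ≤ ∫⁻ r in Ioi 0, ENNReal.ofReal (exp (-(a * r))) := lintegral_mono_set Ioc_subset_Ioi_self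
      _ = ENNReal.ofReal a⁻¹ := by
          rw [← ofReal_integral_eq_lintegral_ofReal]
          · have := integral_exp_mul_Ioi (neg_lt_zero.2 ha) 0
            simp only [neg_mul, mul_zero, exp_zero] at this
            rw [this]; congr 1; field_simp
          · exact (exp_neg_integrableOn_Ioi 0 ha).congr_fun (fun r _ => by simp only [neg_mul])
              measurableSet_Ioi
          · exact ae_of_all _ fun r => (exp_pos _).le

theorem lintegral_Ioc_exp_neg_mul_sq_le {x T : ℝ} (hx : 0 < x) :
    ∫⁻ r in Ioc 0 T, ENNReal.ofReal (exp (-(x * r)) ^ 2) ≤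
      ENNReal.ofReal ((T + 1 / 2) / (1 + x)) := by
  have hsq (r : ℝ) : exp (-(x * r)) ^ 2 = exp (-(2 * x * r)) := by
    rw [← exp_nat_mul]; ring_nf
  simp_rw [hsq]
  refine (lintegral_Ioc_exp_neg_mul_le_min (by positivity)).trans (ENNReal.ofReal_le_ofReal ?_)
  rw [le_div_iff₀ (by positivity), mul_one_add]
  have : x * min T (2 * x)⁻¹ ≤ 1 / 2 := by
    calc x * min T (2 * x)⁻¹ ≤ x * (2 * x)⁻¹ := by gcongr; exact min_le_right _ _
      _ = 1 / 2 := by field_simp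
  linarith [min_le_left T (2 * x)⁻¹]

theorem lintegral_Ioc_sq_exp_increment_div_le {η x T h : ℝ} (hη₀ : -(1 / 2) ≤ η)
    (hη₁ : η ≤ 1 / 2) (hx : 0 < x) (hT : 0 ≤ T) (hh : 0 < h) :
    ∫⁻ r in Ioc 0 T,
        ENNReal.ofReal ((exp (-(x * r)) * (1 - exp (-(x * h)))) ^ 2 / (1 + x) ^ (-η)) ≤
      ENNReal.ofReal ((T + 1 / 2) * h ^ (1 - 2 * η)) * ENNReal.ofReal ((1 + x) ^ (-η)) := by
  set c := (1 - exp (-(x * h))) ^ 2 / (1 + x) ^ (-η)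
  have hc : 0 ≤ c := div_nonneg (sq_nonneg _) (rpow_nonneg (by linarith) _)
  have hsplit (r : ℝ) : ENNReal.ofReal ((exp (-(x * r)) * (1 - exp (-(x * h)))) ^ 2 /
      (1 + x) ^ (-η)) = ENNReal.ofReal (exp (-(x * r)) ^ 2) * ENNReal.ofReal c := by
    rw [← ENNReal.ofReal_mul (sq_nonneg _), mul_pow, mul_div_assoc]
  have hbound : (T + 1 / 2) / (1 + x) * c ≤ (T + 1 / 2) * h ^ (1 - 2 * η) * (1 + x) ^ (-η) :=
    calc (T + 1 / 2) / (1 + x) * c = (T + 1 / 2) * (c / (1 + x)) := by ring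
      _ ≤ (T + 1 / 2) * (h ^ (1 - 2 * η) * (1 + x) ^ (-η)) := by
        gcongr
        exact one_sub_exp_neg_mul_sq_div_le hη₀ hη₁ hx.le hh.le
      _ = _ := by ring
  calc ∫⁻ r in Ioc 0 T,
        ENNReal.ofReal ((exp (-(x * r)) * (1 - exp (-(x * h)))) ^ 2 / (1 + x) ^ (-η))
      = (∫⁻ r in Ioc 0 T, ENNReal.ofReal (exp (-(x * r)) ^ 2)) * ENNReal.ofReal c := by
        simp_rw [hsplit]
        exact lintegral_mul_const' _ _ ENNReal.ofReal_ne_top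
    _ ≤ ENNReal.ofReal ((T + 1 / 2) / (1 + x)) * ENNReal.ofReal c := by
        gcongr
        exact lintegral_Ioc_exp_neg_mul_sq_le hx
    _ ≤ _ := by
        rw [← ENNReal.ofReal_mul' hc, ← ENNReal.ofReal_mul' (rpow_nonneg (by linarith) _)]
        exact ENNReal.ofReal_le_ofReal hbound

section CompletelyMonotoneKernel

variable {ν : Measure ℝ}

theorem integrable_exp_neg_mul_of_integrable_rpow (hν : ∀ᵐ x ∂ν, 0 < x) {η : ℝ} (hη : η ≤ 1)
    (hint : Integrable (fun x => (1 + x) ^ (-η)) ν) {r : ℝ} (hr : 0 < r) :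
    Integrable (fun x => exp (-(x * r))) ν := by
  refine (hint.const_mul (min r 1)⁻¹).mono' (by fun_prop) ?_
  filter_upwards [hν] with x hx
  rw [norm_of_nonneg (exp_pos _).le]
  have hdecay : (1 + x)⁻¹ ≤ (1 + x) ^ (-η) := by
    rw [← rpow_neg_one]
    exact rpow_le_rpow_of_exponent_le (by linarith) (by linarith)
  calc exp (-(x * r)) ≤ (min r 1)⁻¹ * (1 + x)⁻¹ := exp_neg_mul_le_inv_mul_inv_one_add hr hx.le
    _ ≤ (min r 1)⁻¹ * (1 + x) ^ (-η) := by gcongr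

theorem sub_add_eq_integral_exp_neg_mul {c₀ : ℝ} {K : ℝ → ℝ}
    (hK : ∀ r : ℝ, 0 < r → K r = c₀ + ∫ x, exp (-(x * r)) ∂ν)
    (hexp : ∀ r : ℝ, 0 < r → Integrable (fun x => exp (-(x * r))) ν) {r h : ℝ} (hr : 0 < r)
    (hh : 0 < h) :
    K r - K (h + r) = ∫ x, exp (-(x * r)) * (1 - exp (-(x * h))) ∂ν := by
  have hhr : 0 < h + r := by linarith
  rw [hK r hr, hK (h + r) hhr, add_sub_add_left_eq_sub,
    ← integral_sub (hexp r hr) (hexp (h + r) hhr)]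
  simp_rw [exp_neg_mul_sub_exp_neg_mul_add]

theorem ofReal_sq_kernel_sub_le (hν : ∀ᵐ x ∂ν, 0 < x) {η : ℝ} (hη : η ≤ 1)
    (hint : Integrable (fun x => (1 + x) ^ (-η)) ν) {c₀ : ℝ} {K : ℝ → ℝ}
    (hK : ∀ r : ℝ, 0 < r → K r = c₀ + ∫ x, exp (-(x * r)) ∂ν) {r h : ℝ} (hr : 0 < r)
    (hh : 0 < h) :
    ENNReal.ofReal ((K (h + r) - K r) ^ 2) ≤
      (∫⁻ x, ENNReal.ofReal ((1 + x) ^ (-η)) ∂ν) *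
        ∫⁻ x, ENNReal.ofReal ((exp (-(x * r)) * (1 - exp (-(x * h)))) ^ 2 / (1 + x) ^ (-η)) ∂ν := by
  have hexp : ∀ r : ℝ, 0 < r → Integrable (fun x => exp (-(x * r))) ν :=
    fun _ hr => integrable_exp_neg_mul_of_integrable_rpow hν hη hint hr
  have hg₀ : 0 ≤ᵐ[ν] fun x => exp (-(x * r)) * (1 - exp (-(x * h))) := by
    filter_upwards [hν] with x hx
    have : exp (-(x * h)) ≤ 1 := exp_le_one_iff.2 (by nlinarith)
    exact mul_nonneg (exp_pos _).le (by linarith)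
  have hg : Integrable (fun x => exp (-(x * r)) * (1 - exp (-(x * h)))) ν :=
    ((hexp r hr).sub (hexp (h + r) (by linarith))).congr
      (ae_of_all _ fun x => exp_neg_mul_sub_exp_neg_mul_add x r h)
  have hw₀ : ∀ᵐ x ∂ν, 0 < (1 + x) ^ (-η) := by
    filter_upwards [hν] with x hx
    exact rpow_pos_of_pos (by linarith) _
  rw [← neg_sub, neg_sq, sub_add_eq_integral_exp_neg_mul hK hexp hr hh,
    ENNReal.ofReal_pow (integral_nonneg_of_ae hg₀), ofReal_integral_eq_lintegral_ofReal hg hg₀]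
  exact sq_lintegral_ofReal_le_mul_lintegral_sq_div (by fun_prop) (by fun_prop) hw₀

theorem lintegral_sq_kernel_increment_le (hν : ∀ᵐ x ∂ν, 0 < x) {η : ℝ} (hη₀ : -(1 / 2) ≤ η)
    (hη₁ : η ≤ 1 / 2) (hint : Integrable (fun x => (1 + x) ^ (-η)) ν) {c₀ : ℝ} {K : ℝ → ℝ}
    (hK : ∀ r : ℝ, 0 < r → K r = c₀ + ∫ x, exp (-(x * r)) ∂ν) {T : ℝ} (hT : 0 ≤ T) {h : ℝ}
    (hh : 0 < h) :
    ∫⁻ r in Ioc 0 T, ENNReal.ofReal ((K (h + r) - K r) ^ 2) ≤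
      ENNReal.ofReal ((T + 1 / 2) * h ^ (1 - 2 * η)) *
        (∫⁻ x, ENNReal.ofReal ((1 + x) ^ (-η)) ∂ν) ^ 2 := by
  set A := ∫⁻ x, ENNReal.ofReal ((1 + x) ^ (-η)) ∂ν
  have hA : A ≠ ∞ := hint.lintegral_lt_top.ne
  have : SigmaFinite ν := sigmaFinite_of_lintegral_ne_top (by fun_prop)
    (hν.mono fun x hx => (ENNReal.ofReal_pos.2 (rpow_pos_of_pos (by linarith) _)).ne') hA
  set F : ℝ → ℝ → ℝ≥0∞ := fun r x =>
    ENNReal.ofReal ((exp (-(x * r)) * (1 - exp (-(x * h)))) ^ 2 / (1 + x) ^ (-η))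
  calc ∫⁻ r in Ioc 0 T, ENNReal.ofReal ((K (h + r) - K r) ^ 2)
      ≤ ∫⁻ r in Ioc 0 T, A * ∫⁻ x, F r x ∂ν :=
        setLIntegral_mono' measurableSet_Ioc fun r hr =>
          ofReal_sq_kernel_sub_le hν (by linarith) hint hK hr.1 hh
    _ = A * ∫⁻ x, (∫⁻ r in Ioc 0 T, F r x) ∂ν := by
        rw [lintegral_const_mul' _ _ hA, lintegral_lintegral_swap (by fun_prop)]
    _ ≤ A * ∫⁻ x, ENNReal.ofReal ((T + 1 / 2) * h ^ (1 - 2 * η)) *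
          ENNReal.ofReal ((1 + x) ^ (-η)) ∂ν := by
        gcongr A * ?_
        exact lintegral_mono_ae (hν.mono fun x hx =>
          lintegral_Ioc_sq_exp_increment_div_le hη₀ hη₁ hx hT hh)
    _ = _ := by rw [lintegral_const_mul' _ _ ENNReal.ofReal_ne_top]; ring

end CompletelyMonotoneKernel

theorem kernel_increment_bound_general (μ : Measure ℝ) (c₀ : ℝ)
    (η : ℝ) (hη0 : 0 ≤ η) (hη : η < 1 / 2)
    (hint : IntegrableOn (fun x => (1 + x) ^ (-η)) (Set.Ioi 0) μ)
    (K : ℝ → ℝ) (hK : ∀ r : ℝ, 0 < r → K r = c₀ + ∫ x in Set.Ioi 0, Real.exp (-(x * r)) ∂μ)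
    (T : ℝ) (hT : 0 < T) :
    ∃ C : ℝ, 0 < C ∧ ∀ h ∈ Set.Ioc (0 : ℝ) T,
      ∫⁻ r in Set.Ioc 0 T, ENNReal.ofReal ((K (h + r) - K r) ^ 2) ≤
        ENNReal.ofReal (C * h ^ (1 - 2 * η)) := by
  set A := ∫⁻ x in Ioi 0, ENNReal.ofReal ((1 + x) ^ (-η)) ∂μ
  have hA : A ≠ ∞ := hint.lintegral_lt_top.ne
  refine ⟨(T + 1 / 2) * (A.toReal ^ 2 + 1), by positivity, ?_⟩
  rintro h ⟨hh, -⟩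
  calc ∫⁻ r in Ioc 0 T, ENNReal.ofReal ((K (h + r) - K r) ^ 2)
      ≤ ENNReal.ofReal ((T + 1 / 2) * h ^ (1 - 2 * η)) * A ^ 2 :=
        lintegral_sq_kernel_increment_le (ae_restrict_mem measurableSet_Ioi) (by linarith) hη.le
          hint hK hT.le hh
    _ = ENNReal.ofReal ((T + 1 / 2) * h ^ (1 - 2 * η) * A.toReal ^ 2) := by
        rw [ENNReal.ofReal_mul (by positivity : 0 ≤ (T + 1 / 2) * h ^ (1 - 2 * η)),
          ENNReal.ofReal_pow ENNReal.toReal_nonneg,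
          ENNReal.ofReal_toReal hA]
    _ ≤ ENNReal.ofReal ((T + 1 / 2) * (A.toReal ^ 2 + 1) * h ^ (1 - 2 * η)) := by
        rw [mul_right_comm _ _ (h ^ _)]
        gcongr
        linarith

/-- Let `μ` be a Borel measure on `(0,∞)`, `c₀ ≥ 0`, `K(r) = c₀ + ∫ e^{-xr} dμ`, and
suppose `η ∈ [0,1/2)` satisfies `∫ (1+x)^{-η} dμ < ∞`. Then for every `T > 0` there is
`C > 0` with `∫_0^T (K(h+r) − K(r))² dr ≤ C h^{1−2η}` for every `h ∈ (0,T]`. -/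
theorem kernel_increment_bound (μ : Measure ℝ) (c₀ : ℝ) (hc₀ : 0 ≤ c₀)
    (η : ℝ) (hη0 : 0 ≤ η) (hη : η < 1 / 2)
    (hint : IntegrableOn (fun x => (1 + x) ^ (-η)) (Set.Ioi 0) μ)
    (K : ℝ → ℝ) (hK : ∀ r : ℝ, 0 < r → K r = c₀ + ∫ x in Set.Ioi 0, Real.exp (-(x * r)) ∂μ)
    (T : ℝ) (hT : 0 < T) :
    ∃ C : ℝ, 0 < C ∧ ∀ h ∈ Set.Ioc (0 : ℝ) T,
      ∫⁻ r in Set.Ioc 0 T, ENNReal.ofReal ((K (h + r) - K r) ^ 2) ≤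
        ENNReal.ofReal (C * h ^ (1 - 2 * η)) :=
  kernel_increment_bound_general μ c₀ η hη0 hη hint K hK T hT
end

section
/- Let H > 0, C > 0, and let K : (0,∞) → ℝ be measurable, square-integrable on (0,1], with lim_{t→0+} K(t)/t^{H−1/2} = C. Then: (i) lim_{n→∞} n^{2H} ∫_0^{1/n} K(r)² dr = C²/(2H), so λ(n) := (∫_0^{1/n} K(r)² dr)^{-1} satisfies λ(n) ~ 2H·C^{-2}·n^{2H}; and (ii) for all 0 ≤ s < t ≤ 1, lim_{n→∞} λ(n) ∫_0^{s/n} K((t−s)/n + r)·K(r) dr = 2H·∫_0^s (t−s+r)^{H−1/2}·r^{H−1/2} dr, i.e. the limiting kernel is K̄(t) = √(2H)·t^{H−1/2}. -/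
open Real MeasureTheory Filter

private lemma aux_scale (f : ℝ → ℝ) {n : ℝ} (hn : 0 < n) {a : ℝ} (ha : 0 ≤ a) :
    (∫ u in Set.Ioc 0 a, f (u / n)) = n * ∫ r in Set.Ioc 0 (a / n), f r := by
  rw [← intervalIntegral.integral_of_le ha,
    ← intervalIntegral.integral_of_le (div_nonneg ha hn.le),
    intervalIntegral.integral_comp_div f hn.ne']
  simp [smul_eq_mul]

private lemma aux_pow {H : ℝ} {n : ℝ} (hn : 0 < n) :
    n ^ (2 * H) = n * (n ^ (H - 1 / 2) * n ^ (H - 1 / 2)) := by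
  rw [show 2 * H = (1 : ℝ) + ((H - 1 / 2) + (H - 1 / 2)) by ring, Real.rpow_add hn,
    Real.rpow_add hn, Real.rpow_one]

private lemma aux_bound {H C : ℝ} {K : ℝ → ℝ} (hC : 0 < C)
    (hlim : Tendsto (fun t => K t / t ^ (H - 1 / 2)) (nhdsWithin 0 (Set.Ioi 0)) (nhds C)) :
    ∃ δ > (0 : ℝ), ∀ x : ℝ, 0 < x → x ≤ δ → |K x / x ^ (H - 1 / 2)| ≤ C + 1 := by
  have h := Metric.tendsto_nhds.mp hlim 1 one_pos
  rw [eventually_nhdsWithin_iff, Metric.eventually_nhds_iff] at h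
  obtain ⟨ε, hε, hb⟩ := h
  refine ⟨ε / 2, by positivity, fun x hx hxε => ?_⟩
  have hd : dist x 0 < ε := by
    rw [Real.dist_eq, sub_zero, abs_of_pos hx]; linarith
  have h1 := hb hd hx
  rw [Real.dist_eq] at h1
  calc |K x / x ^ (H - 1 / 2)| = |(K x / x ^ (H - 1 / 2) - C) + C| := by ring_nf
    _ ≤ |K x / x ^ (H - 1 / 2) - C| + |C| := abs_add_le _ _
    _ ≤ C + 1 := by rw [abs_of_pos hC]; linarith

private lemma aux_pt {H C : ℝ} {K : ℝ → ℝ}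
    (hlim : Tendsto (fun t => K t / t ^ (H - 1 / 2)) (nhdsWithin 0 (Set.Ioi 0)) (nhds C))
    {u : ℝ} (hu : 0 < u) :
    Tendsto (fun n : ℕ => K (u / n) / (u / n) ^ (H - 1 / 2)) atTop (nhds C) := by
  apply hlim.comp
  rw [tendsto_nhdsWithin_iff]
  refine ⟨tendsto_const_div_atTop_nhds_zero_nat u, ?_⟩
  filter_upwards [eventually_gt_atTop 0] with n hn
  exact div_pos hu (by exact_mod_cast hn)

private lemma aux_id1 {H : ℝ} (K : ℝ → ℝ) {n : ℝ} (hn : 0 < n) {u : ℝ} (hu : 0 < u) :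
    n ^ (2 * H) * n⁻¹ * K (u / n) ^ 2
      = (K (u / n) / (u / n) ^ (H - 1 / 2)) ^ 2 * (u ^ (H - 1 / 2) * u ^ (H - 1 / 2)) := by
  have hx : (0 : ℝ) < (u / n) ^ (H - 1 / 2) := Real.rpow_pos_of_pos (div_pos hu hn) _
  have hK : K (u / n) = K (u / n) / (u / n) ^ (H - 1 / 2) * (u / n) ^ (H - 1 / 2) :=
    (div_mul_cancel₀ _ hx.ne').symm
  set g := K (u / n) / (u / n) ^ (H - 1 / 2) with hg
  rw [hK, Real.div_rpow hu.le hn.le, aux_pow hn]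
  have h1 : n ≠ 0 := hn.ne'
  have h2 : n ^ (H - 1 / 2) ≠ 0 := (Real.rpow_pos_of_pos hn _).ne'
  field_simp

private lemma aux_id2 {H : ℝ} (K : ℝ → ℝ) (w : ℝ) {n : ℝ} (hn : 0 < n) {x u : ℝ}
    (hx : 0 < x) (hu : 0 < u) :
    w⁻¹ * n⁻¹ * (K (x / n) * K (u / n))
      = (n ^ (2 * H) * w)⁻¹ * (K (x / n) / (x / n) ^ (H - 1 / 2))
          * (K (u / n) / (u / n) ^ (H - 1 / 2)) * (x ^ (H - 1 / 2) * u ^ (H - 1 / 2)) := by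
  have hxp : (0 : ℝ) < (x / n) ^ (H - 1 / 2) := Real.rpow_pos_of_pos (div_pos hx hn) _
  have hup : (0 : ℝ) < (u / n) ^ (H - 1 / 2) := Real.rpow_pos_of_pos (div_pos hu hn) _
  have hKx : K (x / n) = K (x / n) / (x / n) ^ (H - 1 / 2) * (x / n) ^ (H - 1 / 2) :=
    (div_mul_cancel₀ _ hxp.ne').symm
  have hKu : K (u / n) = K (u / n) / (u / n) ^ (H - 1 / 2) * (u / n) ^ (H - 1 / 2) :=
    (div_mul_cancel₀ _ hup.ne').symm
  set gx := K (x / n) / (x / n) ^ (H - 1 / 2) with hgx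
  set gu := K (u / n) / (u / n) ^ (H - 1 / 2) with hgu
  rw [hKx, hKu, Real.div_rpow hx.le hn.le, Real.div_rpow hu.le hn.le, aux_pow hn]
  have h1 : n ≠ 0 := hn.ne'
  have h2 : n ^ (H - 1 / 2) ≠ 0 := (Real.rpow_pos_of_pos hn _).ne'
  field_simp

set_option maxHeartbeats 800000

/-- Let `H > 0`, `C > 0`, and `K : (0,∞) → ℝ` measurable, square-integrable on `(0,1]`,
with `K(t)/t^{H−1/2} → C` as `t → 0+`. Then:
(i) `n^{2H} ∫_0^{1/n} K(r)² dr → C²/(2H)`, so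
`λ(n) = (∫_0^{1/n} K(r)² dr)⁻¹ ~ 2H·C^{-2}·n^{2H}`;
(ii) for all `0 ≤ s < t ≤ 1`,
`λ(n) ∫_0^{s/n} K((t−s)/n + r) K(r) dr → 2H ∫_0^s (t−s+r)^{H−1/2} r^{H−1/2} dr`,
i.e. the limiting kernel is `K̄(t) = √(2H)·t^{H−1/2}`. -/
theorem asymptotically_RL_kernel_CLT (H C : ℝ) (hH : 0 < H) (hC : 0 < C)
    (K : ℝ → ℝ) (hmeas : Measurable K)
    (hL2 : IntegrableOn (fun r => K r ^ 2) (Set.Ioc 0 1))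
    (hlim : Tendsto (fun t => K t / t ^ (H - 1 / 2)) (nhdsWithin 0 (Set.Ioi 0)) (nhds C)) :
    Tendsto (fun n : ℕ => (n : ℝ) ^ (2 * H) * ∫ r in Set.Ioc 0 (1 / (n : ℝ)), K r ^ 2)
        atTop (nhds (C ^ 2 / (2 * H))) ∧
    Tendsto (fun n : ℕ =>
        (∫ r in Set.Ioc 0 (1 / (n : ℝ)), K r ^ 2)⁻¹ / (2 * H / C ^ 2 * (n : ℝ) ^ (2 * H)))
        atTop (nhds 1) ∧
    ∀ s t : ℝ, 0 ≤ s → s < t → t ≤ 1 →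
      Tendsto (fun n : ℕ =>
          (∫ r in Set.Ioc 0 (1 / (n : ℝ)), K r ^ 2)⁻¹ *
            ∫ r in Set.Ioc 0 (s / (n : ℝ)), K ((t - s) / (n : ℝ) + r) * K r)
        atTop
        (nhds (2 * H * ∫ r in Set.Ioc 0 s, (t - s + r) ^ (H - 1 / 2) * r ^ (H - 1 / 2))) := by
  obtain ⟨δ, hδ, hKb⟩ := aux_bound hC hlim
  set φ : ℕ → ℝ := fun n => ∫ r in Set.Ioc 0 (1 / (n : ℝ)), K r ^ 2 with hφdef
  clear_value φ
  simp only [show ∀ n : ℕ, (∫ r in Set.Ioc 0 (1 / (n : ℝ)), K r ^ 2) = φ n from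
    fun n => by rw [hφdef]]
  have hφ0 : ∀ n, 0 ≤ φ n := fun n => by
    simp only [hφdef]; exact integral_nonneg fun r => sq_nonneg _
  have hp1 : (-1 : ℝ) < 2 * H - 1 := by linarith
  have hp2 : (-1 : ℝ) < H - 1 / 2 := by linarith
  -- a uniform "n large" condition
  have hNδ : ∀ n : ℕ, ⌈1/δ⌉₊ + 1 ≤ n → (0 : ℝ) < n ∧ (1 : ℝ) / n ≤ δ := by
    intro n hn
    have h1 : 1 ≤ n := le_trans (Nat.le_add_left 1 _) hn
    have hnpos : (0 : ℝ) < n := by exact_mod_cast h1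
    refine ⟨hnpos, ?_⟩
    have h2 : (1/δ : ℝ) ≤ n := by
      refine le_trans (Nat.le_ceil _) ?_
      exact_mod_cast Nat.le_of_succ_le hn
    rw [div_le_iff₀ hnpos]
    rw [div_le_iff₀ hδ] at h2
    nlinarith
  -- Part (i)
  have h1 : Tendsto (fun n : ℕ => (n : ℝ) ^ (2 * H) * φ n) atTop (nhds (C ^ 2 / (2 * H))) := by
    have hInt : ∫ u in Set.Ioc (0:ℝ) 1, C ^ 2 * (u ^ (H - 1/2) * u ^ (H - 1/2))
        = C ^ 2 / (2 * H) := by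
      rw [MeasureTheory.integral_const_mul]
      have hI2 : ∫ u in Set.Ioc (0:ℝ) 1, (u ^ (H - 1/2) * u ^ (H - 1/2)) = 1 / (2 * H) := by
        rw [setIntegral_congr_fun measurableSet_Ioc
          (g := fun u : ℝ => u ^ (2 * H - 1)) (fun u hu => by
            rw [← Real.rpow_add hu.1, show (H - 1/2) + (H - 1/2) = 2 * H - 1 by ring])]
        rw [← intervalIntegral.integral_of_le zero_le_one, integral_rpow (Or.inl hp1),
          show 2 * H - 1 + 1 = 2 * H by ring, Real.one_rpow,
          Real.zero_rpow (by positivity)]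
        norm_num
      rw [hI2]; ring
    rw [← hInt]
    refine Tendsto.congr' ?_ (tendsto_integral_filter_of_dominated_convergence
      (μ := volume.restrict (Set.Ioc 0 1))
      (F := fun (n : ℕ) (u : ℝ) => (n : ℝ) ^ (2 * H) * (n : ℝ)⁻¹ * K (u / n) ^ 2)
      (f := fun u => C ^ 2 * (u ^ (H - 1/2) * u ^ (H - 1/2)))
      (bound := fun u => (C + 1) ^ 2 * u ^ (2 * H - 1)) ?_ ?_ ?_ ?_)
    · -- eventual equality of sequences
      filter_upwards [eventually_ge_atTop 1] with n hn
      have hnpos : (0 : ℝ) < n := by exact_mod_cast hn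
      have hsub : (∫ u in Set.Ioc (0:ℝ) 1, K (u / (n : ℝ)) ^ 2) = (n : ℝ) * φ n := by
        simp only [hφdef]
        simpa using aux_scale (fun r => K r ^ 2) hnpos zero_le_one
      rw [MeasureTheory.integral_const_mul, hsub, mul_assoc,
        inv_mul_cancel_left₀ hnpos.ne']
    · exact Eventually.of_forall fun n =>
        (((hmeas.comp (measurable_id.div_const _)).pow_const 2).const_mul
          _).aestronglyMeasurable
    · filter_upwards [eventually_ge_atTop (⌈1/δ⌉₊ + 1)] with n hn
      obtain ⟨hnpos, hδn⟩ := hNδ n hn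
      filter_upwards [ae_restrict_mem measurableSet_Ioc] with u hu
      rw [aux_id1 (H := H) K hnpos hu.1, Real.norm_eq_abs]
      have hun : u / (n : ℝ) ≤ δ := le_trans (by gcongr; exact hu.2) hδn
      have hgb := hKb (u / n) (div_pos hu.1 hnpos) hun
      have hg2 : (K (u / (n:ℝ)) / (u / (n:ℝ)) ^ (H - 1/2)) ^ 2 ≤ (C + 1) ^ 2 := by
        rw [← sq_abs]
        exact pow_le_pow_left₀ (abs_nonneg _) hgb 2
      have hupos : (0:ℝ) < u ^ (H - 1/2) := Real.rpow_pos_of_pos hu.1 _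
      rw [abs_of_nonneg (mul_nonneg (sq_nonneg _) (by positivity)),
        ← Real.rpow_add hu.1, show (H - 1/2) + (H - 1/2) = 2 * H - 1 by ring]
      exact mul_le_mul_of_nonneg_right hg2 (Real.rpow_nonneg hu.1.le _)
    · exact ((intervalIntegral.intervalIntegrable_rpow' hp1 (a := 0) (b := 1)).1).const_mul _
    · filter_upwards [ae_restrict_mem measurableSet_Ioc] with u hu
      refine Tendsto.congr' ?_ (((aux_pt hlim hu.1).pow 2).mul_const
        (u ^ (H - 1/2) * u ^ (H - 1/2)))
      filter_upwards [eventually_ge_atTop 1] with n hn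
      have hnpos : (0 : ℝ) < n := by exact_mod_cast hn
      exact (aux_id1 (H := H) K hnpos hu.1).symm
  have hinv : Tendsto (fun n : ℕ => ((n : ℝ) ^ (2 * H) * φ n)⁻¹) atTop
      (nhds (2 * H / C ^ 2)) := by
    have h := h1.inv₀ (by positivity)
    rwa [inv_div] at h
  refine ⟨h1, ?_, ?_⟩
  · -- Part (ii)
    have h := hinv.const_mul (C ^ 2 / (2 * H))
    rw [show C ^ 2 / (2 * H) * (2 * H / C ^ 2) = 1 from by field_simp] at h
    refine h.congr fun n => ?_
    simp only [div_eq_mul_inv, mul_inv, inv_inv]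
    ring
  · -- Part (iii)
    intro s t hs hst ht1
    have hts : 0 < t - s := sub_pos.mpr hst
    have hIntEq : 2 * H * ∫ r in Set.Ioc 0 s, (t - s + r) ^ (H - 1/2) * r ^ (H - 1/2)
        = ∫ u in Set.Ioc 0 s,
            2 * H / C ^ 2 * C * C * ((t - s + u) ^ (H - 1/2) * u ^ (H - 1/2)) := by
      rw [MeasureTheory.integral_const_mul,
        show 2 * H / C ^ 2 * C * C = 2 * H from by field_simp]
    rw [hIntEq]
    set M : ℝ := max ((t - s) ^ (H - 1/2)) (t ^ (H - 1/2)) with hM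
    have hMle : ∀ u : ℝ, 0 < u → u ≤ s → (t - s + u) ^ (H - 1/2) ≤ M := by
      intro u hu hus
      rcases le_or_gt 0 (H - 1/2) with h | h
      · exact le_trans (Real.rpow_le_rpow (by linarith) (by linarith) h) (le_max_right _ _)
      · exact le_trans (Real.rpow_le_rpow_of_nonpos hts (by linarith) h.le) (le_max_left _ _)
    refine Tendsto.congr' ?_ (tendsto_integral_filter_of_dominated_convergence
      (μ := volume.restrict (Set.Ioc 0 s))
      (F := fun (n : ℕ) (u : ℝ) =>
        (φ n)⁻¹ * (n : ℝ)⁻¹ * (K ((t - s + u) / n) * K (u / n)))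
      (f := fun u => 2 * H / C ^ 2 * C * C * ((t - s + u) ^ (H - 1/2) * u ^ (H - 1/2)))
      (bound := fun u => (2 * H / C ^ 2 + 1) * (C + 1) * (C + 1) * M * u ^ (H - 1/2))
      ?_ ?_ ?_ ?_)
    · -- eventual equality of the sequences
      filter_upwards [eventually_ge_atTop 1] with n hn
      have hnpos : (0 : ℝ) < n := by exact_mod_cast hn
      have hsub : (∫ u in Set.Ioc 0 s, K ((t - s + u) / (n : ℝ)) * K (u / (n : ℝ)))
          = (n : ℝ) * ∫ r in Set.Ioc 0 (s / (n : ℝ)), K ((t - s) / (n : ℝ) + r) * K r := by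
        have h0 := aux_scale (fun r => K ((t - s) / (n : ℝ) + r) * K r) hnpos hs
        simpa [← add_div] using h0
      rw [MeasureTheory.integral_const_mul, hsub, mul_assoc,
        inv_mul_cancel_left₀ hnpos.ne']
    · refine Eventually.of_forall fun n => ?_
      have hm1 : Measurable fun u : ℝ => K ((t - s + u) / n) :=
        hmeas.comp ((measurable_const.add measurable_id).div_const _)
      have hm2 : Measurable fun u : ℝ => K (u / n) :=
        hmeas.comp (measurable_id.div_const _)
      exact ((hm1.mul hm2).const_mul _).aestronglyMeasurable
    · have hAev : ∀ᶠ n : ℕ in atTop, ((n : ℝ) ^ (2 * H) * φ n)⁻¹ ≤ 2 * H / C ^ 2 + 1 :=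
        hinv.eventually (eventually_le_nhds (lt_add_one _))
      filter_upwards [hAev, eventually_ge_atTop (⌈1/δ⌉₊ + 1)] with n hA1 hn
      obtain ⟨hnpos, hδn⟩ := hNδ n hn
      filter_upwards [ae_restrict_mem measurableSet_Ioc] with u hu
      have hxu : 0 < t - s + u := by linarith [hu.1]
      rw [aux_id2 (H := H) K (φ n) hnpos hxu hu.1, Real.norm_eq_abs,
        abs_mul, abs_mul, abs_mul]
      have ha0 : |((n : ℝ) ^ (2 * H) * φ n)⁻¹| = ((n : ℝ) ^ (2 * H) * φ n)⁻¹ :=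
        abs_of_nonneg (inv_nonneg.mpr (mul_nonneg (Real.rpow_nonneg hnpos.le _) (hφ0 n)))
      have harg1 : (t - s + u) / (n : ℝ) ≤ δ := by
        refine le_trans ?_ hδn
        gcongr
        linarith [hu.2, ht1]
      have harg2 : u / (n : ℝ) ≤ δ := by
        refine le_trans ?_ hδn
        gcongr
        linarith [hu.2, ht1]
      have hg1 := hKb _ (div_pos hxu hnpos) harg1
      have hg2 := hKb _ (div_pos hu.1 hnpos) harg2
      have habs : |(t - s + u) ^ (H - 1/2) * u ^ (H - 1/2)|
          = (t - s + u) ^ (H - 1/2) * u ^ (H - 1/2) :=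
        abs_of_nonneg (mul_nonneg (Real.rpow_nonneg hxu.le _) (Real.rpow_nonneg hu.1.le _))
      rw [ha0, habs]
      calc ((n : ℝ) ^ (2 * H) * φ n)⁻¹ * |K ((t - s + u) / n) / ((t - s + u) / n) ^ (H - 1/2)|
            * |K (u / n) / (u / n) ^ (H - 1/2)|
            * ((t - s + u) ^ (H - 1/2) * u ^ (H - 1/2))
          ≤ (2 * H / C ^ 2 + 1) * (C + 1) * (C + 1) * (M * u ^ (H - 1/2)) := by
            have hnn : 0 ≤ ((n : ℝ) ^ (2 * H) * φ n)⁻¹ :=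
              inv_nonneg.mpr (mul_nonneg (Real.rpow_nonneg hnpos.le _) (hφ0 n))
            gcongr
            · exact mul_nonneg (Real.rpow_nonneg hxu.le _) (Real.rpow_nonneg hu.1.le _)
            · exact Real.rpow_nonneg hu.1.le _
            · exact hMle u hu.1 hu.2
        _ = (2 * H / C ^ 2 + 1) * (C + 1) * (C + 1) * M * u ^ (H - 1/2) := by ring
    · exact ((intervalIntegral.intervalIntegrable_rpow' hp2 (a := 0) (b := s)).1).const_mul _
    · filter_upwards [ae_restrict_mem measurableSet_Ioc] with u hu
      have hxu : 0 < t - s + u := by linarith [hu.1]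
      refine Tendsto.congr' ?_ (((hinv.mul (aux_pt hlim hxu)).mul (aux_pt hlim hu.1)).mul_const
        ((t - s + u) ^ (H - 1/2) * u ^ (H - 1/2)))
      filter_upwards [eventually_ge_atTop 1] with n hn
      have hnpos : (0 : ℝ) < n := by exact_mod_cast hn
      exact (aux_id2 (H := H) K (φ n) hnpos hxu hu.1).symm
end

section
/- Let H ∈ (0, 1/2] and let K(t) = t^{H−1/2}·log(1 + 1/t)/Γ(H+1/2) be the log-modulated Riemann–Liouville kernel. Then lim_{n→∞} n^{2H}·(log n)^{-2} · ∫_0^{1/n} K(r)² dr = 1/(2H·Γ(H+1/2)²); equivalently, λ(n) := (∫_0^{1/n} K(r)² dr)^{-1} satisfies λ(n) ~ 2H·Γ(H+1/2)²·n^{2H}/(log n)². -/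
open Real MeasureTheory Filter Set Topology

/-!
On `(0, 1]` one has `log (1 + 1/t) = -log t + log (1 + t)` with `0 ≤ log (1 + t) ≤ t` and
`-t log t ≤ 1`, so `log (1 + 1/t) ^ 2` lies between `log t ^ 2` and `log t ^ 2 + 3`. With
`a = 2H`, the integral `∫_0^ε t^(a-1) log(1 + 1/t)² dt` is therefore squeezed between
`∫_0^ε t^(a-1) log² t dt = ε^a (log² ε / a - 2 log ε / a² + 2 / a³)` (the integrand is the
nonnegative derivative of this explicit primitive, hence integrable) and that value plus
`3 ε^a / a`. For `ε = 1/n` both bounds equal `n^(-a) log² n / a · (1 + O(1 / log n))`.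
-/

noncomputable def rpowLogSqPrimitive (a y : ℝ) : ℝ :=
  y ^ a * (log y ^ 2 / a - 2 * log y / a ^ 2 + 2 / a ^ 3)

lemma hasDerivAt_rpowLogSqPrimitive {a x : ℝ} (ha : a ≠ 0) (hx : 0 < x) :
    HasDerivAt (rpowLogSqPrimitive a) (x ^ (a - 1) * log x ^ 2) x := by
  have hpow : HasDerivAt (fun y : ℝ => y ^ a) (a * x ^ (a - 1)) x :=
    hasDerivAt_rpow_const (Or.inl hx.ne')
  have hlog : HasDerivAt log x⁻¹ x := hasDerivAt_log hx.ne'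
  have hpoly := (((hlog.fun_pow 2).div_const a).fun_sub
    ((hlog.const_mul 2).div_const (a ^ 2))).add_const (2 / a ^ 3)
  refine (hpow.mul hpoly).congr_deriv ?_
  rw [show x ^ a = x ^ (a - 1) * x by rw [← rpow_add_one hx.ne']; ring_nf]
  push_cast
  field_simp
  ring

lemma tendsto_rpow_mul_log_pow_nhdsGT_zero {a : ℝ} (ha : 0 < a) (k : ℕ) :
    Tendsto (fun x => x ^ a * log x ^ k) (𝓝[>] 0) (𝓝 0) := by
  rcases k with _ | k
  · simpa [zero_rpow ha.ne'] using
      ((continuousAt_rpow_const 0 a (Or.inr ha.le)).tendsto.mono_left nhdsWithin_le_nhds)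
  · have h := (tendsto_log_mul_rpow_nhdsGT_zero (r := a / (k + 1)) (by positivity)).pow (k + 1)
    rw [zero_pow k.succ_ne_zero] at h
    refine h.congr' (eventually_nhdsWithin_of_forall fun x (hx : 0 < x) => ?_)
    rw [mul_pow, ← rpow_mul_natCast hx.le]
    push_cast
    rw [div_mul_cancel₀ _ (by positivity)]
    ring

lemma continuousOn_rpowLogSqPrimitive {a : ℝ} (ha : 0 < a) :
    ContinuousOn (rpowLogSqPrimitive a) (Ici 0) := by
  intro x hx
  rcases (mem_Ici.1 hx).eq_or_lt with rfl | hx0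
  · rw [← continuousWithinAt_Ioi_iff_Ici, ContinuousWithinAt]
    have h := (((tendsto_rpow_mul_log_pow_nhdsGT_zero ha 2).div_const a).sub
      (((tendsto_rpow_mul_log_pow_nhdsGT_zero ha 1).const_mul 2).div_const (a ^ 2))).add
      (((tendsto_rpow_mul_log_pow_nhdsGT_zero ha 0).const_mul 2).div_const (a ^ 3))
    simp only [zero_div, mul_zero, sub_zero, add_zero] at h
    convert h using 2 with y
    · simp only [rpowLogSqPrimitive]; ring
    · simp [rpowLogSqPrimitive, zero_rpow ha.ne']
  · exact (hasDerivAt_rpowLogSqPrimitive ha.ne' hx0).continuousAt.continuousWithinAt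

lemma integrableOn_rpow_mul_log_sq {a : ℝ} (ha : 0 < a) (ε : ℝ) :
    IntegrableOn (fun t => t ^ (a - 1) * log t ^ 2) (Ioc 0 ε) :=
  intervalIntegral.integrableOn_deriv_of_nonneg
    ((continuousOn_rpowLogSqPrimitive ha).mono Icc_subset_Ici_self)
    (fun _ hx => hasDerivAt_rpowLogSqPrimitive ha.ne' hx.1) (fun _ hx => by
      have := hx.1; positivity)

lemma integral_rpow_mul_log_sq {a ε : ℝ} (ha : 0 < a) (hε : 0 ≤ ε) :
    ∫ t in Ioc 0 ε, t ^ (a - 1) * log t ^ 2 = rpowLogSqPrimitive a ε := by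
  rw [← intervalIntegral.integral_of_le hε,
    intervalIntegral.integral_eq_sub_of_hasDerivAt_of_le hε
    ((continuousOn_rpowLogSqPrimitive ha).mono Icc_subset_Ici_self)
    (fun _ hx => hasDerivAt_rpowLogSqPrimitive ha.ne' hx.1)
    ((intervalIntegrable_iff_integrableOn_Ioc_of_le hε).2 (integrableOn_rpow_mul_log_sq ha ε))]
  simp [rpowLogSqPrimitive, zero_rpow ha.ne']

lemma log_one_add_inv_sq_mem_Icc {t : ℝ} (ht0 : 0 < t) (ht1 : t ≤ 1) :
    log (1 + 1 / t) ^ 2 ∈ Icc (log t ^ 2) (log t ^ 2 + 3) := by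
  have hsplit : log (1 + 1 / t) = log (1 + t) + -log t := by
    rw [show 1 + 1 / t = (1 + t) / t by field_simp; ring, log_div (by positivity) ht0.ne']
    ring
  have hm0 : 0 ≤ log (1 + t) := log_nonneg (by linarith)
  have hmt : log (1 + t) ≤ t := by linarith [log_le_sub_one_of_pos (x := 1 + t) (by linarith)]
  have hl0 : 0 ≤ -log t := neg_nonneg.2 (log_nonpos ht0.le ht1)
  have htl : t * -log t ≤ 1 := by
    have h := log_le_sub_one_of_pos (x := 1 / t) (by positivity)
    rw [one_div, log_inv] at h
    calc t * -log t ≤ t * (t⁻¹ - 1) := mul_le_mul_of_nonneg_left h ht0.le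
      _ = 1 - t := by field_simp
      _ ≤ 1 := by linarith
  rw [hsplit]
  constructor <;> nlinarith [mul_le_mul_of_nonneg_right hmt hl0]

lemma integral_rpow_mul_log_one_add_inv_sq_mem_Icc {a ε : ℝ} (ha : 0 < a) (hε0 : 0 ≤ ε)
    (hε1 : ε ≤ 1) :
    ∫ t in Ioc 0 ε, t ^ (a - 1) * log (1 + 1 / t) ^ 2 ∈
      Icc (rpowLogSqPrimitive a ε) (rpowLogSqPrimitive a ε + 3 * ε ^ a / a) := by
  have hlogSq := integrableOn_rpow_mul_log_sq ha ε
  have hpow : IntegrableOn (fun t : ℝ => t ^ (a - 1)) (Ioc 0 ε) :=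
    (intervalIntegral.intervalIntegrable_rpow' (by linarith)).1
  have hmajor := hlogSq.add (hpow.const_mul 3)
  have hbound : ∀ t ∈ Ioc 0 ε, t ^ (a - 1) * log (1 + 1 / t) ^ 2 ∈
      Icc (t ^ (a - 1) * log t ^ 2) (t ^ (a - 1) * log t ^ 2 + 3 * t ^ (a - 1)) := by
    intro t ht
    have hpos : 0 ≤ t ^ (a - 1) := rpow_nonneg ht.1.le _
    obtain ⟨hlo, hhi⟩ := log_one_add_inv_sq_mem_Icc ht.1 (ht.2.trans hε1)
    exact ⟨mul_le_mul_of_nonneg_left hlo hpos,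
      (mul_le_mul_of_nonneg_left hhi hpos).trans_eq (by ring)⟩
  have hint : IntegrableOn (fun t => t ^ (a - 1) * log (1 + 1 / t) ^ 2) (Ioc 0 ε) := by
    refine hmajor.mono' (by fun_prop) ?_
    filter_upwards [ae_restrict_mem measurableSet_Ioc] with t ht
    rw [Real.norm_of_nonneg (by have := ht.1; positivity)]
    exact (hbound t ht).2
  have hpow_integral : ∫ t in Ioc 0 ε, t ^ (a - 1) = ε ^ a / a := by
    rw [← intervalIntegral.integral_of_le hε0, integral_rpow (Or.inl (by linarith))]
    simp [zero_rpow ha.ne']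
  rw [← integral_rpow_mul_log_sq ha hε0]
  constructor
  · exact setIntegral_mono_on hlogSq hint measurableSet_Ioc fun t ht => (hbound t ht).1
  · calc _ ≤ ∫ t in Ioc 0 ε, (t ^ (a - 1) * log t ^ 2 + 3 * t ^ (a - 1)) :=
          setIntegral_mono_on hint hmajor measurableSet_Ioc fun t ht => (hbound t ht).2
      _ = _ := by
          rw [integral_add hlogSq (hpow.const_mul 3), integral_const_mul, hpow_integral]
          ring

theorem tendsto_rpow_div_log_sq_mul_integral_rpow_mul_log_one_add_inv_sq {a : ℝ} (ha : 0 < a) :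
    Tendsto (fun x : ℝ =>
        x ^ a / log x ^ 2 * ∫ t in Ioc 0 (1 / x), t ^ (a - 1) * log (1 + 1 / t) ^ 2)
      atTop (𝓝 (1 / a)) := by
  have hu : Tendsto (fun x => (log x)⁻¹) atTop (𝓝 0) := tendsto_log_atTop.inv_tendsto_atTop
  have hlower : Tendsto (fun x => 1 / a + 2 / a ^ 2 * (log x)⁻¹ + 2 / a ^ 3 * (log x)⁻¹ ^ 2)
      atTop (𝓝 (1 / a)) := by
    simpa using
      ((hu.const_mul (2 / a ^ 2)).const_add (1 / a)).add ((hu.pow 2).const_mul (2 / a ^ 3))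
  have hupper := hlower.add ((hu.pow 2).const_mul (3 / a))
  rw [zero_pow two_ne_zero, mul_zero, add_zero] at hupper
  have hbounds : ∀ᶠ x in atTop,
      x ^ a / log x ^ 2 * ∫ t in Ioc 0 (1 / x), t ^ (a - 1) * log (1 + 1 / t) ^ 2 ∈
        Icc (1 / a + 2 / a ^ 2 * (log x)⁻¹ + 2 / a ^ 3 * (log x)⁻¹ ^ 2)
          (1 / a + 2 / a ^ 2 * (log x)⁻¹ + 2 / a ^ 3 * (log x)⁻¹ ^ 2 +
            3 / a * (log x)⁻¹ ^ 2) := by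
    filter_upwards [eventually_gt_atTop 1] with x hx
    have hx0 : 0 < x := by linarith
    have hlog : 0 < log x := log_pos hx
    obtain ⟨hlo, hhi⟩ := integral_rpow_mul_log_one_add_inv_sq_mem_Icc ha (by positivity)
      ((div_le_one hx0).2 hx.le)
    have hscale : 0 ≤ x ^ a / log x ^ 2 := by positivity
    have hxa : x ^ a * (1 / x) ^ a = 1 := by
      rw [div_rpow zero_le_one hx0.le, one_rpow, mul_one_div_cancel (by positivity)]
    have hprim : x ^ a / log x ^ 2 * rpowLogSqPrimitive a (1 / x) =
        1 / a + 2 / a ^ 2 * (log x)⁻¹ + 2 / a ^ 3 * (log x)⁻¹ ^ 2 := by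
      rw [rpowLogSqPrimitive, one_div x, log_inv, ← one_div]
      field_simp
      linear_combination (log x ^ 2 * a ^ 2 + 2 * log x * a + 2) * hxa
    refine ⟨hprim ▸ mul_le_mul_of_nonneg_left hlo hscale, ?_⟩
    calc _ ≤ x ^ a / log x ^ 2 * (rpowLogSqPrimitive a (1 / x) + 3 * (1 / x) ^ a / a) :=
          mul_le_mul_of_nonneg_left hhi hscale
      _ = _ := by
          rw [mul_add, hprim, show x ^ a / log x ^ 2 * (3 * (1 / x) ^ a / a) =
            3 / a * (log x)⁻¹ ^ 2 * (x ^ a * (1 / x) ^ a) by ring, hxa, mul_one]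
  exact tendsto_of_tendsto_of_tendsto_of_le_of_le' hlower hupper (hbounds.mono fun _ h => h.1)
    (hbounds.mono fun _ h => h.2)

theorem log_modulated_kernel_scaling_general (H : ℝ) (hH0 : 0 < H)
    (K : ℝ → ℝ)
    (hK : ∀ t : ℝ, K t = t ^ (H - 1 / 2) * Real.log (1 + 1 / t) / Real.Gamma (H + 1 / 2)) :
    Tendsto (fun n : ℕ =>
        (n : ℝ) ^ (2 * H) / Real.log n ^ 2 * ∫ r in Set.Ioc 0 (1 / (n : ℝ)), K r ^ 2)
        atTop (nhds (1 / (2 * H * Real.Gamma (H + 1 / 2) ^ 2))) ∧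
    Tendsto (fun n : ℕ =>
        (∫ r in Set.Ioc 0 (1 / (n : ℝ)), K r ^ 2)⁻¹ * Real.log n ^ 2 /
          (2 * H * Real.Gamma (H + 1 / 2) ^ 2 * (n : ℝ) ^ (2 * H)))
        atTop (nhds 1) := by
  have hscale : 0 < 2 * H * Gamma (H + 1 / 2) ^ 2 := by
    have := Gamma_pos_of_pos (s := H + 1 / 2) (by linarith)
    positivity
  have hK_sq : ∀ ε, ∫ r in Ioc 0 ε, K r ^ 2 =
      (∫ t in Ioc 0 ε, t ^ (2 * H - 1) * log (1 + 1 / t) ^ 2) / Gamma (H + 1 / 2) ^ 2 := by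
    intro ε
    rw [← integral_div]
    refine setIntegral_congr_fun measurableSet_Ioc fun r hr => ?_
    rw [hK, div_pow, mul_pow, ← rpow_natCast, ← rpow_mul hr.1.le]
    ring_nf
  have hlim : Tendsto (fun n : ℕ =>
      (n : ℝ) ^ (2 * H) / log n ^ 2 * ∫ r in Ioc 0 (1 / (n : ℝ)), K r ^ 2)
      atTop (𝓝 (1 / (2 * H * Gamma (H + 1 / 2) ^ 2))) := by
    have h := ((tendsto_rpow_div_log_sq_mul_integral_rpow_mul_log_one_add_inv_sq
      (a := 2 * H) (by positivity)).comp tendsto_natCast_atTop_atTop).div_const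
      (Gamma (H + 1 / 2) ^ 2)
    rw [div_div] at h
    refine h.congr fun n => ?_
    rw [Function.comp_apply, hK_sq, mul_div_assoc]
  refine ⟨hlim, ?_⟩
  have hinv := (hlim.mul_const (2 * H * Gamma (H + 1 / 2) ^ 2)).inv₀ (by positivity)
  rw [one_div_mul_cancel hscale.ne', inv_one] at hinv
  refine hinv.congr fun n => ?_
  simp only [div_eq_mul_inv, mul_inv, inv_inv]
  ring

/-- For the log-modulated Riemann–Liouville kernel
`K(t) = t^{H−1/2} log(1+1/t)/Γ(H+1/2)` with `H ∈ (0,1/2]`, one has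
`n^{2H} (log n)^{-2} ∫_0^{1/n} K(r)² dr → 1/(2H·Γ(H+1/2)²)`; equivalently,
`λ(n) = (∫_0^{1/n} K(r)² dr)⁻¹` satisfies `λ(n) ~ 2H·Γ(H+1/2)²·n^{2H}/(log n)²`. -/
theorem log_modulated_kernel_scaling (H : ℝ) (hH0 : 0 < H) (hH : H ≤ 1 / 2)
    (K : ℝ → ℝ)
    (hK : ∀ t : ℝ, K t = t ^ (H - 1 / 2) * Real.log (1 + 1 / t) / Real.Gamma (H + 1 / 2)) :
    Tendsto (fun n : ℕ =>
        (n : ℝ) ^ (2 * H) / Real.log n ^ 2 * ∫ r in Set.Ioc 0 (1 / (n : ℝ)), K r ^ 2)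
        atTop (nhds (1 / (2 * H * Real.Gamma (H + 1 / 2) ^ 2))) ∧
    Tendsto (fun n : ℕ =>
        (∫ r in Set.Ioc 0 (1 / (n : ℝ)), K r ^ 2)⁻¹ * Real.log n ^ 2 /
          (2 * H * Real.Gamma (H + 1 / 2) ^ 2 * (n : ℝ) ^ (2 * H)))
        atTop (nhds 1) :=
  log_modulated_kernel_scaling_general H hH0 K hK
end

section
/- Let H ∈ (0, 1/2] and let K(t) = t^{H−1/2}·log(1 + 1/t)/Γ(H+1/2). Then there exists C* > 0 such that ∫_0^t K(s)² ds ≥ C*·t^{2H} for all t ∈ (0,1], and for every γ ∈ (0, H) there exists C_γ > 0 such that ∫_0^t K(s)² ds ≤ C_γ·t^{2γ} for all t ∈ (0,1]. Moreover, there is no constant C for which ∫_0^t K(s)² ds ≤ C·t^{2H} holds for all t ∈ (0,1]. -/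
open Real MeasureTheory

private lemma rpow_setIntegral' {r t : ℝ} (hr : -1 < r) (ht : 0 < t) :
    ∫ s in Set.Ioc (0:ℝ) t, s ^ r = t ^ (r + 1) / (r + 1) := by
  rw [← intervalIntegral.integral_of_le ht.le,
    integral_rpow (Or.inl hr), Real.zero_rpow (by linarith)]
  ring

open intervalIntegral in
private lemma rpow_integrableOn' {r t : ℝ} (hr : -1 < r) (ht : 0 ≤ t) :
    IntegrableOn (fun s : ℝ => s ^ r) (Set.Ioc 0 t) := by
  have := (intervalIntegrable_rpow' (a := 0) (b := t) hr)
  rwa [intervalIntegrable_iff_integrableOn_Ioc_of_le ht] at this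

private lemma K_contOn {H G : ℝ} (K : ℝ → ℝ)
    (hK : ∀ t : ℝ, K t = t ^ (H - 1 / 2) * Real.log (1 + 1 / t) / G) {t : ℝ} :
    ContinuousOn (fun s => K s ^ 2) (Set.Ioc 0 t) := by
  intro x hx
  have hx0 : (0:ℝ) < x := hx.1
  have h1 : ContinuousAt (fun s : ℝ => K s ^ 2) x := by
    have h2 : ContinuousAt (fun s : ℝ => s ^ (H - 1/2) * Real.log (1 + 1/s) / G) x := by
      apply ContinuousAt.div_const
      apply ContinuousAt.mul
      · exact Real.continuousAt_rpow_const x _ (Or.inl hx0.ne')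
      · have harg : ContinuousAt (fun s : ℝ => 1 + 1/s) x :=
          continuousAt_const.add (continuousAt_const.div continuousAt_id hx0.ne')
        have hne : 1 + 1/x ≠ 0 := by positivity
        exact harg.log hne
    have h3 : ContinuousAt K x := by
      have hKe : K = fun s : ℝ => s ^ (H - 1/2) * Real.log (1 + 1/s) / G := funext hK
      rw [hKe]; exact h2
    exact h3.pow 2
  exact h1.continuousWithinAt

/-- For the log-modulated Riemann–Liouville kernel
`K(t) = t^{H−1/2} log(1+1/t)/Γ(H+1/2)` with `H ∈ (0,1/2]`:
there is `C* > 0` with `∫_0^t K(s)² ds ≥ C*·t^{2H}` on `(0,1]`; for every `γ ∈ (0,H)`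
there is `C_γ > 0` with `∫_0^t K(s)² ds ≤ C_γ·t^{2γ}` on `(0,1]`; but no constant `C`
satisfies `∫_0^t K(s)² ds ≤ C·t^{2H}` for all `t ∈ (0,1]`. -/
theorem log_modulated_kernel_L2_order (H : ℝ) (hH0 : 0 < H) (hH : H ≤ 1 / 2)
    (K : ℝ → ℝ)
    (hK : ∀ t : ℝ, K t = t ^ (H - 1 / 2) * Real.log (1 + 1 / t) / Real.Gamma (H + 1 / 2)) :
    (∃ Cs : ℝ, 0 < Cs ∧ ∀ t ∈ Set.Ioc (0 : ℝ) 1,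
      Cs * t ^ (2 * H) ≤ ∫ s in Set.Ioc 0 t, K s ^ 2) ∧
    (∀ γ : ℝ, 0 < γ → γ < H → ∃ Cγ : ℝ, 0 < Cγ ∧ ∀ t ∈ Set.Ioc (0 : ℝ) 1,
      ∫ s in Set.Ioc 0 t, K s ^ 2 ≤ Cγ * t ^ (2 * γ)) ∧
    ¬ ∃ C : ℝ, ∀ t ∈ Set.Ioc (0 : ℝ) 1, ∫ s in Set.Ioc 0 t, K s ^ 2 ≤ C * t ^ (2 * H) := by
  set G := Real.Gamma (H + 1 / 2) with hGdef
  have hG : 0 < G := Real.Gamma_pos_of_pos (by linarith)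
  have hlog2 : 0 < Real.log 2 := Real.log_pos one_lt_two
  -- squared kernel formula
  have hK2 : ∀ s : ℝ, 0 < s →
      K s ^ 2 = s ^ (2 * H - 1) * Real.log (1 + 1 / s) ^ 2 / G ^ 2 := by
    intro s hs
    rw [hK, div_pow, mul_pow, ← Real.rpow_natCast (s ^ (H - 1/2)) 2, ← Real.rpow_mul hs.le]
    norm_num
    rw [show (H - 1/2) * 2 = 2*H - 1 by ring]
  -- upper pointwise bound
  have hub : ∀ ε : ℝ, 0 < ε → ∀ s ∈ Set.Ioc (0:ℝ) 1,
      K s ^ 2 ≤ (Real.log 2 + 1/ε)^2/G^2 * s ^ (2*H - 1 - 2*ε) := by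
    intro ε hε s hs
    obtain ⟨hs0, hs1⟩ := hs
    have h1 : (1:ℝ) ≤ 1/s := by rw [le_div_iff₀ hs0, one_mul]; exact hs1
    have hY : (1:ℝ) ≤ s ^ (-ε) :=
      Real.one_le_rpow_of_pos_of_le_one_of_nonpos hs0 hs1 (by linarith)
    have hYpos : 0 < s ^ (-ε) := Real.rpow_pos_of_pos hs0 _
    have hlog : Real.log (1 + 1/s) ≤ (Real.log 2 + 1/ε) * s ^ (-ε) := by
      have h2 : Real.log (1 + 1/s) ≤ Real.log (2/s) := by
        apply Real.log_le_log (by positivity)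
        have h2s : 2/s = 1/s + 1/s := by ring
        rw [h2s]
        linarith
      have h3 : Real.log (2/s) = Real.log 2 - Real.log s := Real.log_div two_ne_zero hs0.ne'
      have h4 : Real.log (s ^ (-ε)) = -ε * Real.log s := Real.log_rpow hs0 _
      have h5 : Real.log (s ^ (-ε)) ≤ s ^ (-ε) := by
        have := Real.log_le_sub_one_of_pos hYpos; linarith
      have h7 : -Real.log s ≤ (1/ε) * s ^ (-ε) := by
        have he : -Real.log s = (1/ε) * Real.log (s ^ (-ε)) := by
          rw [h4]; field_simp
        rw [he]
        exact mul_le_mul_of_nonneg_left h5 (by positivity)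
      have h8 : Real.log 2 ≤ Real.log 2 * s ^ (-ε) := le_mul_of_one_le_right hlog2.le hY
      calc Real.log (1 + 1/s) ≤ Real.log 2 - Real.log s := by rw [← h3]; exact h2
        _ ≤ Real.log 2 * s^(-ε) + (1/ε) * s^(-ε) := by linarith
        _ = (Real.log 2 + 1/ε) * s^(-ε) := by ring
    have hlognn : 0 ≤ Real.log (1 + 1/s) := Real.log_nonneg (by linarith)
    have hsq : Real.log (1 + 1/s)^2 ≤ ((Real.log 2 + 1/ε) * s^(-ε))^2 := by nlinarith
    have hexp : s ^ (2*H-1) * (s ^ (-ε))^2 = s ^ (2*H - 1 - 2*ε) := by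
      rw [← Real.rpow_natCast (s ^ (-ε)) 2, ← Real.rpow_mul hs0.le, ← Real.rpow_add hs0]
      congr 1
      push_cast; ring
    rw [hK2 s hs0]
    have hPnn : 0 ≤ s ^ (2*H-1) := Real.rpow_nonneg hs0.le _
    calc s^(2*H-1) * Real.log (1 + 1/s)^2 / G^2
        ≤ s^(2*H-1) * ((Real.log 2 + 1/ε) * s^(-ε))^2 / G^2 := by
          apply div_le_div_of_nonneg_right ?_ (by positivity)
          · exact mul_le_mul_of_nonneg_left hsq hPnn
      _ = (Real.log 2 + 1/ε)^2/G^2 * (s^(2*H-1) * (s^(-ε))^2) := by ring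
      _ = _ := by rw [hexp]
  -- integrability
  have hIntK : ∀ t ∈ Set.Ioc (0:ℝ) 1, IntegrableOn (fun s => K s ^ 2) (Set.Ioc 0 t) := by
    intro t ht
    refine Integrable.mono'
      ((rpow_integrableOn' (r := H - 1) (by linarith) ht.1.le).const_mul
        ((Real.log 2 + 1/(H/2))^2/G^2))
      ((K_contOn K hK).aestronglyMeasurable measurableSet_Ioc) ?_
    filter_upwards [self_mem_ae_restrict measurableSet_Ioc] with s hs
    rw [Real.norm_eq_abs, abs_of_nonneg (sq_nonneg _)]
    have := hub (H/2) (by linarith) s ⟨hs.1, hs.2.trans ht.2⟩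
    rwa [show 2*H - 1 - 2*(H/2) = H - 1 by ring] at this
  -- generic lower bound
  have hlow : ∀ L : ℝ, 0 ≤ L → ∀ t ∈ Set.Ioc (0:ℝ) 1,
      (∀ s ∈ Set.Ioc (0:ℝ) t, L ≤ Real.log (1 + 1/s)) →
      L ^ 2 / G ^ 2 * (t ^ (2*H) / (2*H)) ≤ ∫ s in Set.Ioc 0 t, K s ^ 2 := by
    intro L hL t ht hLb
    have hg : IntegrableOn (fun s : ℝ => L^2/G^2 * s ^ (2*H-1)) (Set.Ioc 0 t) :=
      (rpow_integrableOn' (by linarith) ht.1.le).const_mul _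
    have hmono := setIntegral_mono_on hg (hIntK t ht) measurableSet_Ioc ?_
    · rw [integral_const_mul, rpow_setIntegral' (by linarith) ht.1,
        show 2*H - 1 + 1 = 2*H by ring] at hmono
      exact hmono
    · intro s hs
      have hs0 : (0:ℝ) < s := hs.1
      have hPnn : 0 ≤ s ^ (2*H-1) := Real.rpow_nonneg hs0.le _
      have hLs := hLb s hs
      have hsq : L^2 ≤ Real.log (1 + 1/s)^2 := by nlinarith
      rw [hK2 s hs0]
      calc L^2/G^2 * s^(2*H-1) = s^(2*H-1) * L^2 / G^2 := by ring
        _ ≤ s^(2*H-1) * Real.log (1 + 1/s)^2 / G^2 := by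
            apply div_le_div_of_nonneg_right ?_ (by positivity)
            · exact mul_le_mul_of_nonneg_left hsq hPnn
  refine ⟨⟨Real.log 2 ^ 2 / G ^ 2 / (2*H), by positivity, ?_⟩, ?_, ?_⟩
  · -- lower bound
    intro t ht
    have h := hlow (Real.log 2) hlog2.le t ht ?_
    · calc Real.log 2 ^ 2 / G ^ 2 / (2*H) * t ^ (2*H)
          = Real.log 2 ^ 2 / G ^ 2 * (t ^ (2*H) / (2*H)) := by ring
        _ ≤ _ := h
    · intro s hs
      apply Real.log_le_log (by norm_num)
      have : (1:ℝ) ≤ 1/s := by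
        rw [le_div_iff₀ hs.1, one_mul]; exact hs.2.trans ht.2
      linarith
  · -- upper bound
    intro γ hγ0 hγH
    have hε : 0 < H - γ := by linarith
    have hCpos : 0 < Real.log 2 + 1/(H-γ) := by positivity
    refine ⟨(Real.log 2 + 1/(H-γ))^2/G^2 / (2*γ), by positivity, ?_⟩
    intro t ht
    have hf : IntegrableOn (fun s : ℝ => (Real.log 2 + 1/(H-γ))^2/G^2 * s ^ (2*γ-1))
        (Set.Ioc 0 t) := (rpow_integrableOn' (by linarith) ht.1.le).const_mul _
    have hmono := setIntegral_mono_on (hIntK t ht) hf measurableSet_Ioc ?_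
    · rw [integral_const_mul, rpow_setIntegral' (by linarith) ht.1,
        show 2*γ - 1 + 1 = 2*γ by ring] at hmono
      calc ∫ s in Set.Ioc 0 t, K s ^ 2
          ≤ (Real.log 2 + 1/(H-γ))^2/G^2 * (t^(2*γ)/(2*γ)) := hmono
        _ = (Real.log 2 + 1/(H-γ))^2/G^2 / (2*γ) * t^(2*γ) := by ring
    · intro s hs
      have := hub (H-γ) hε s ⟨hs.1, hs.2.trans ht.2⟩
      rwa [show 2*H - 1 - 2*(H-γ) = 2*γ - 1 by ring] at this
  · -- no C works
    rintro ⟨C, hC⟩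
    set a := Real.sqrt (max (C * (G^2*(2*H))) 0) + 1 with ha
    have hsnn : 0 ≤ Real.sqrt (max (C * (G^2*(2*H))) 0) := Real.sqrt_nonneg _
    have ha0 : 0 < a := by positivity
    set t := Real.exp (-a) with hts
    have ht0 : 0 < t := Real.exp_pos _
    have ht1 : t ≤ 1 := by
      rw [hts, ← Real.exp_zero]
      exact Real.exp_le_exp.mpr (by linarith)
    have hlb := hlow a ha0.le t ⟨ht0, ht1⟩ ?_
    · have hub2 := hC t ⟨ht0, ht1⟩
      have hT : 0 < t ^ (2*H) := Real.rpow_pos_of_pos ht0 _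
      have h2 : (a^2/(G^2*(2*H))) * t^(2*H) ≤ C * t^(2*H) := by
        calc (a^2/(G^2*(2*H))) * t^(2*H) = a^2/G^2 * (t^(2*H)/(2*H)) := by ring
          _ ≤ ∫ s in Set.Ioc 0 t, K s ^ 2 := hlb
          _ ≤ C * t^(2*H) := hub2
      have h3 : a^2/(G^2*(2*H)) ≤ C := le_of_mul_le_mul_right h2 hT
      have h4 : a^2 ≤ C * (G^2*(2*H)) := by
        rwa [div_le_iff₀ (by positivity)] at h3
      have h5 : Real.sqrt (max (C * (G^2*(2*H))) 0) ^ 2 = max (C * (G^2*(2*H))) 0 :=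
        Real.sq_sqrt (le_max_right _ _)
      have h6 : C * (G^2*(2*H)) ≤ max (C * (G^2*(2*H))) 0 := le_max_left _ _
      nlinarith
    · intro s hs
      have hs0 : (0:ℝ) < s := hs.1
      have h7 : Real.log (1/t) ≤ Real.log (1/s) :=
        Real.log_le_log (by positivity) (by
          apply one_div_le_one_div_of_le hs0 hs.2)
      have h8 : Real.log (1/s) ≤ Real.log (1 + 1/s) :=
        Real.log_le_log (by positivity) (by linarith)
      have h9 : Real.log (1/t) = a := by
        rw [one_div, ← Real.exp_neg, neg_neg, Real.log_exp]
      linarith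
end

section
/- Let H ∈ (0, 1/2] and let K(t) = t^{H−1/2}·log(1 + 1/t)/Γ(H+1/2), and set λ(n) = (∫_0^{1/n} K(r)² dr)^{-1}. Then for all 0 ≤ s < t ≤ 1, lim_{n→∞} λ(n) ∫_0^{s/n} K((t−s)/n + r)·K(r) dr = 2H·∫_0^s (t−s+r)^{H−1/2}·r^{H−1/2} dr, i.e. the limiting kernel is K̄(t) = √(2H)·t^{H−1/2}. -/
/-! Substituting `r = v / n` turns both integrals into `log² n / (n ^ (2H) Γ(H + 1/2)²)` times
integrals over fixed intervals, in which each kernel factor becomes `v ^ (H - 1/2)` times the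
normalized logarithm `log (1 + n / v) / log n`. That factor tends to `1` pointwise and is bounded
by a multiple of `v ^ (-H/2)` uniformly in `n ≥ 3`, so by dominated convergence the ratio tends to
`∫₀ˢ (t - s + v) ^ (H - 1/2) v ^ (H - 1/2) dv / ∫₀¹ v ^ (2H - 1) dv`. -/

open Real MeasureTheory Filter

open Set Topology

noncomputable def logModulatedKernel (H t : ℝ) : ℝ :=
  t ^ (H - 1 / 2) * log (1 + 1 / t) / Gamma (H + 1 / 2)

noncomputable def normalizedLog (n : ℕ) (v : ℝ) : ℝ :=
  log (1 + n / v) / log n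

lemma normalizedLog_nonneg (n : ℕ) {v : ℝ} (hv : 0 ≤ v) : 0 ≤ normalizedLog n v :=
  div_nonneg (log_nonneg (le_add_of_nonneg_right (div_nonneg n.cast_nonneg hv)))
    (log_natCast_nonneg n)

lemma normalizedLog_le_rpow {n : ℕ} {v δ : ℝ} (hn : 3 ≤ n) (hv0 : 0 < v) (hv1 : v ≤ 1)
    (hδ : 0 < δ) : normalizedLog n v ≤ (2 + δ⁻¹) * v ^ (-δ) := by
  have hn3 : (3 : ℝ) ≤ n := by exact_mod_cast hn
  have hlogn : 1 ≤ log n := by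
    rw [le_log_iff_exp_le (by positivity)]
    linarith [exp_one_lt_d9]
  have hpow : 1 ≤ v ^ (-δ) := one_le_rpow_of_pos_of_le_one_of_nonpos hv0 hv1 (by linarith)
  have hlog_inv : log v⁻¹ ≤ v ^ (-δ) / δ := by
    have := log_le_rpow_div (inv_nonneg.2 hv0.le) hδ
    rwa [inv_rpow hv0.le, ← rpow_neg hv0.le] at this
  have hlog_split : log (1 + n / v) ≤ log 2 + log n + log v⁻¹ := by
    rw [← log_mul two_ne_zero (by positivity), ← log_mul (by positivity) (by positivity)]
    refine log_le_log (by positivity) ?_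
    have : 1 ≤ n / v := (one_le_div hv0).2 (by linarith)
    calc 1 + n / v ≤ 2 * (n / v) := by linarith
      _ = 2 * n * v⁻¹ := by ring
  rw [normalizedLog, div_le_iff₀ (by linarith)]
  have h1 : log n ≤ v ^ (-δ) * log n := le_mul_of_one_le_left (by linarith) hpow
  have h2 : v ^ (-δ) / δ ≤ v ^ (-δ) / δ * log n := le_mul_of_one_le_right (by positivity) hlogn
  have h3 : 1 ≤ v ^ (-δ) * log n := one_le_mul_of_one_le_of_one_le hpow hlogn
  have h4 : (2 + δ⁻¹) * v ^ (-δ) * log n = 2 * (v ^ (-δ) * log n) + v ^ (-δ) / δ * log n := by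
    ring
  linarith [log_two_lt_d9]

lemma rpow_mul_normalizedLog_le {n : ℕ} {c δ v w : ℝ} (hn : 3 ≤ n) (hδ : 0 < δ) (hcδ : c ≤ δ)
    (hv : 0 < v) (hvw : v ≤ w) (hw : w ≤ 1) :
    w ^ c * normalizedLog n w ≤ (2 + δ⁻¹) * v ^ (c - δ) := by
  have hw0 : 0 < w := hv.trans_le hvw
  calc w ^ c * normalizedLog n w ≤ w ^ c * ((2 + δ⁻¹) * w ^ (-δ)) :=
        mul_le_mul_of_nonneg_left (normalizedLog_le_rpow hn hw0 hw hδ) (by positivity)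
    _ = (2 + δ⁻¹) * w ^ (c - δ) := by rw [sub_eq_add_neg, rpow_add hw0]; ring
    _ ≤ (2 + δ⁻¹) * v ^ (c - δ) :=
        mul_le_mul_of_nonneg_left (rpow_le_rpow_of_nonpos hv hvw (by linarith)) (by positivity)

lemma tendsto_normalizedLog {v : ℝ} (hv : 0 < v) :
    Tendsto (fun n : ℕ => normalizedLog n v) atTop (𝓝 1) := by
  have hinv : Tendsto (fun n : ℕ => (n : ℝ)⁻¹) atTop (𝓝 0) :=
    tendsto_inv_atTop_zero.comp tendsto_natCast_atTop_atTop
  have hlog : Tendsto (fun n : ℕ => log ((n : ℝ)⁻¹ + v⁻¹)) atTop (𝓝 (log v⁻¹)) := by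
    simpa [Function.comp_def] using
      (continuousAt_log (by positivity)).tendsto.comp (hinv.add_const v⁻¹)
  have hloginv : Tendsto (fun n : ℕ => (log n)⁻¹) atTop (𝓝 0) :=
    (tendsto_log_atTop.comp tendsto_natCast_atTop_atTop).inv_tendsto_atTop
  have hlim := (hlog.mul hloginv).const_add 1
  rw [mul_zero, add_zero] at hlim
  refine hlim.congr' ?_
  filter_upwards [eventually_ge_atTop 2] with n hn
  have hn2 : (2 : ℝ) ≤ n := by exact_mod_cast hn
  have hlogn : 0 < log n := log_pos (by linarith)
  have hsplit : 1 + n / v = n * ((n : ℝ)⁻¹ + v⁻¹) := by field_simp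
  rw [normalizedLog, hsplit, log_mul (by positivity) (by positivity), add_div,
    div_self hlogn.ne', div_eq_mul_inv]

lemma setIntegral_logModulatedKernel_scaling (H a b : ℝ) (ha : 0 ≤ a) (hb : 0 ≤ b) {n : ℕ}
    (hn : 2 ≤ n) :
    ∫ r in Ioc 0 (b / n), logModulatedKernel H (a / n + r) * logModulatedKernel H r =
      log n ^ 2 / (n ^ (2 * H) * Gamma (H + 1 / 2) ^ 2) *
        ∫ v in Ioc 0 b, (a + v) ^ (H - 1 / 2) * v ^ (H - 1 / 2) *
          (normalizedLog n (a + v) * normalizedLog n v) := by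
  have hn2 : (2 : ℝ) ≤ n := by exact_mod_cast hn
  have hn0 : (0 : ℝ) < n := by linarith
  have hlogn : log n ≠ 0 := (log_pos (by linarith)).ne'
  set f := fun r => logModulatedKernel H (a / n + r) * logModulatedKernel H r
  have hsubst : ∫ r in Ioc 0 (b / n), f r = (n : ℝ)⁻¹ * ∫ v in Ioc 0 b, f (v / n) := by
    rw [← intervalIntegral.integral_of_le (by positivity), ← intervalIntegral.integral_of_le hb,
      intervalIntegral.integral_comp_div f hn0.ne', zero_div, smul_eq_mul,
      inv_mul_cancel_left₀ hn0.ne']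
  have hpoint : ∀ v ∈ Ioc 0 b, f (v / n) = (n : ℝ) * (log n ^ 2 / (n ^ (2 * H) *
      Gamma (H + 1 / 2) ^ 2)) * ((a + v) ^ (H - 1 / 2) * v ^ (H - 1 / 2) *
        (normalizedLog n (a + v) * normalizedLog n v)) := by
    intro v hv
    have hnH : (n : ℝ) ^ (2 * H) = n * (n ^ (H - 1 / 2) * n ^ (H - 1 / 2)) := by
      rw [← rpow_add hn0]
      nth_rewrite 2 [← rpow_one (n : ℝ)]
      rw [← rpow_add hn0]
      ring_nf
    simp only [f, logModulatedKernel, normalizedLog, ← add_div, one_div_div,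
      div_rpow (by linarith [hv.1] : 0 ≤ a + v) hn0.le, div_rpow hv.1.le hn0.le, hnH]
    field_simp
  rw [hsubst, setIntegral_congr_fun measurableSet_Ioc hpoint, integral_const_mul,
    ← mul_assoc, inv_mul_cancel_left₀ hn0.ne']

lemma tendsto_setIntegral_rpow_mul_normalizedLog {H a s : ℝ} (hH0 : 0 < H) (hH1 : H ≤ 1)
    (ha : 0 ≤ a) (has : a + s ≤ 1) :
    Tendsto (fun n : ℕ => ∫ v in Ioc 0 s, (a + v) ^ (H - 1 / 2) * v ^ (H - 1 / 2) *
        (normalizedLog n (a + v) * normalizedLog n v))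
      atTop (𝓝 (∫ v in Ioc 0 s, (a + v) ^ (H - 1 / 2) * v ^ (H - 1 / 2))) := by
  set C : ℝ := 2 + (H / 2)⁻¹
  have hbound : ∀ {n : ℕ}, 3 ≤ n → ∀ {v w : ℝ}, 0 < v → v ≤ w → w ≤ 1 →
      w ^ (H - 1 / 2) * normalizedLog n w ≤ C * v ^ ((H - 1) / 2) := by
    intro n hn v w hv hvw hw
    have := rpow_mul_normalizedLog_le (c := H - 1 / 2) hn (half_pos hH0) (by linarith) hv hvw hw
    rwa [show H - 1 / 2 - H / 2 = (H - 1) / 2 by ring] at this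
  have hdom : IntegrableOn (fun v => C ^ 2 * v ^ (H - 1)) (Ioc 0 s) := by
    have h := intervalIntegral.intervalIntegrable_rpow' (a := 0) (b := 1) (by linarith : -1 < H - 1)
    rw [intervalIntegrable_iff, uIoc_of_le zero_le_one] at h
    exact (h.mono_set (Ioc_subset_Ioc_right (by linarith))).const_mul _
  refine tendsto_integral_filter_of_dominated_convergence _ ?_ ?_ hdom ?_
  · exact Eventually.of_forall fun n => by unfold normalizedLog; fun_prop
  · filter_upwards [eventually_ge_atTop 3] with n hn
    refine (ae_restrict_iff' measurableSet_Ioc).2 (ae_of_all _ fun v ⟨hv0, hvs⟩ => ?_)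
    have hw0 : 0 < a + v := by linarith
    have hsq : v ^ (H - 1) = v ^ ((H - 1) / 2) * v ^ ((H - 1) / 2) := by
      rw [← rpow_add hv0]; ring_nf
    have hLw := normalizedLog_nonneg n hw0.le
    have hLv := normalizedLog_nonneg n hv0.le
    rw [norm_of_nonneg (by positivity), hsq]
    calc (a + v) ^ (H - 1 / 2) * v ^ (H - 1 / 2) * (normalizedLog n (a + v) * normalizedLog n v)
        = ((a + v) ^ (H - 1 / 2) * normalizedLog n (a + v)) *
            (v ^ (H - 1 / 2) * normalizedLog n v) := by ring
      _ ≤ (C * v ^ ((H - 1) / 2)) * (C * v ^ ((H - 1) / 2)) :=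
          mul_le_mul (hbound hn hv0 (by linarith) (by linarith))
            (hbound hn hv0 le_rfl (by linarith))
            (by positivity) (by positivity)
      _ = C ^ 2 * (v ^ ((H - 1) / 2) * v ^ ((H - 1) / 2)) := by ring
  · refine (ae_restrict_iff' measurableSet_Ioc).2 (ae_of_all _ fun v ⟨hv0, _⟩ => ?_)
    simpa using tendsto_const_nhds.mul
      ((tendsto_normalizedLog (by linarith : 0 < a + v)).mul (tendsto_normalizedLog hv0))

lemma setIntegral_Ioc_zero_one_rpow_mul_rpow {H : ℝ} (hH : 0 < H) :
    ∫ v in Ioc 0 1, v ^ (H - 1 / 2) * v ^ (H - 1 / 2) = (2 * H)⁻¹ := by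
  have hpoint : ∀ v ∈ Ioc (0 : ℝ) 1, v ^ (H - 1 / 2) * v ^ (H - 1 / 2) = v ^ (2 * H - 1) :=
    fun v hv => by rw [← rpow_add hv.1]; ring_nf
  rw [setIntegral_congr_fun measurableSet_Ioc hpoint, ← intervalIntegral.integral_of_le zero_le_one,
    integral_rpow (Or.inl (by linarith)), one_rpow, zero_rpow (by linarith), sub_add_cancel,
    sub_zero, one_div]

/-- For the log-modulated Riemann–Liouville kernel
`K(t) = t^{H−1/2} log(1+1/t)/Γ(H+1/2)` with `H ∈ (0,1/2]` and
`λ(n) = (∫_0^{1/n} K(r)² dr)⁻¹`: for all `0 ≤ s < t ≤ 1`,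
`λ(n) ∫_0^{s/n} K((t−s)/n + r) K(r) dr → 2H ∫_0^s (t−s+r)^{H−1/2} r^{H−1/2} dr`,
i.e. the limiting kernel is `K̄(t) = √(2H)·t^{H−1/2}`. -/
theorem log_modulated_kernel_limit_covariance (H : ℝ) (hH0 : 0 < H) (hH : H ≤ 1 / 2)
    (K : ℝ → ℝ)
    (hK : ∀ t : ℝ, K t = t ^ (H - 1 / 2) * Real.log (1 + 1 / t) / Real.Gamma (H + 1 / 2))
    (s t : ℝ) (hs : 0 ≤ s) (hst : s < t) (ht : t ≤ 1) :
    Tendsto (fun n : ℕ =>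
        (∫ r in Set.Ioc 0 (1 / (n : ℝ)), K r ^ 2)⁻¹ *
          ∫ r in Set.Ioc 0 (s / (n : ℝ)), K ((t - s) / (n : ℝ) + r) * K r)
      atTop
      (nhds (2 * H * ∫ r in Set.Ioc 0 s, (t - s + r) ^ (H - 1 / 2) * r ^ (H - 1 / 2))) := by
  obtain rfl : K = logModulatedKernel H := funext hK
  have hnum := tendsto_setIntegral_rpow_mul_normalizedLog hH0 (by linarith) (sub_nonneg.2 hst.le)
    (by linarith : t - s + s ≤ 1)
  have hden := tendsto_setIntegral_rpow_mul_normalizedLog (s := 1) hH0 (by linarith) le_rfl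
    (by norm_num)
  simp only [zero_add] at hden
  rw [setIntegral_Ioc_zero_one_rpow_mul_rpow hH0] at hden
  convert (hnum.div hden (by positivity)).congr' ?_ using 2
  · rw [div_inv_eq_mul, mul_comm]
  filter_upwards [eventually_ge_atTop 2] with n hn
  have hκ : log n ^ 2 / ((n : ℝ) ^ (2 * H) * Gamma (H + 1 / 2) ^ 2) ≠ 0 := by
    have : 0 < log n := log_pos (by exact_mod_cast hn)
    have := Gamma_pos_of_pos (by linarith : 0 < H + 1 / 2)
    positivity
  have hsq : ∫ r in Ioc 0 (1 / (n : ℝ)), logModulatedKernel H r ^ 2 =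
      ∫ r in Ioc 0 (1 / (n : ℝ)), logModulatedKernel H (0 / n + r) * logModulatedKernel H r := by
    simp only [zero_div, zero_add, sq]
  rw [hsq, setIntegral_logModulatedKernel_scaling H 0 1 le_rfl zero_le_one hn,
    setIntegral_logModulatedKernel_scaling H (t - s) s (by linarith) hs hn, mul_inv,
    mul_mul_mul_comm, inv_mul_cancel₀ hκ, one_mul, inv_mul_eq_div]
  simp only [Pi.div_apply, zero_add]
end

section
/- Let μ be a Borel measure on (0,∞), let ξ : (0,∞) → ℝ be measurable, let a ∈ [0,1] and η ∈ ℝ. Then for every s ≥ 0, ∫_{(0,∞)} (1 − e^{−xs})·|ξ(x)| dμ(x) ≤ s^a · (∫_{(0,∞)} ξ(x)²·(1+x)^η dμ(x))^{1/2} · (∫_{(0,∞)} (1+x)^{2a−η} dμ(x))^{1/2}. In particular, if both integrals on the right are finite, the function g(s) = ∫ e^{−xs} ξ(x) dμ(x) satisfies the Hölder-type bound |g(s) − g(0)| ≤ C·s^a at the origin. -/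
open Real MeasureTheory

/-! Since `1 - e^{-u} ≤ u^a`, the integrand is at most `s^a (1+x)^a |ξ(x)|`. Writing
`(1+x)^a |ξ(x)| = (|ξ(x)| (1+x)^{η/2}) · (1+x)^{a-η/2}`, the Cauchy–Schwarz inequality bounds its
integral by the two square-root factors. -/

theorem one_sub_exp_neg_le_rpow {u a : ℝ} (hu : 0 ≤ u) (ha0 : 0 ≤ a) (ha1 : a ≤ 1) :
    1 - exp (-u) ≤ u ^ a := by
  rcases le_or_gt u 1 with hu1 | hu1
  · calc 1 - exp (-u) ≤ u := by linarith [add_one_le_exp (-u)]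
      _ = u ^ (1 : ℝ) := (rpow_one u).symm
      _ ≤ u ^ a := rpow_le_rpow_of_exponent_ge' hu hu1 ha0 ha1
  · calc 1 - exp (-u) ≤ 1 := by linarith [exp_pos (-u)]
      _ = u ^ (0 : ℝ) := (rpow_zero u).symm
      _ ≤ u ^ a := rpow_le_rpow_of_exponent_le hu1.le ha0

theorem one_sub_exp_neg_mul_le {x s a : ℝ} (hx : 0 ≤ x) (hs : 0 ≤ s) (ha0 : 0 ≤ a)
    (ha1 : a ≤ 1) : 1 - exp (-(x * s)) ≤ s ^ a * (1 + x) ^ a :=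
  calc 1 - exp (-(x * s)) ≤ (x * s) ^ a := one_sub_exp_neg_le_rpow (by positivity) ha0 ha1
    _ = s ^ a * x ^ a := by rw [mul_rpow hx hs, mul_comm]
    _ ≤ s ^ a * (1 + x) ^ a := by gcongr; linarith

theorem sqrt_ofReal_sq_mul_rpow_mul_sqrt_ofReal_rpow {r t : ℝ} (ht : 0 < t) (b η : ℝ) :
    ENNReal.ofReal (r ^ 2 * t ^ η) ^ (1 / 2 : ℝ) * ENNReal.ofReal (t ^ (2 * b - η)) ^ (1 / 2 : ℝ)
      = ENNReal.ofReal (t ^ b * |r|) := by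
  rw [ENNReal.ofReal_rpow_of_nonneg (by positivity) (by norm_num),
    ENNReal.ofReal_rpow_of_nonneg (by positivity) (by norm_num), ← ENNReal.ofReal_mul (by positivity)]
  congr 1
  rw [mul_rpow (sq_nonneg r) (rpow_nonneg ht.le η), ← sqrt_eq_rpow, sqrt_sq_eq_abs,
    ← rpow_mul ht.le, ← rpow_mul ht.le, mul_assoc, ← rpow_add ht, mul_comm]
  ring_nf

theorem lintegral_ofReal_rpow_mul_abs_le {α : Type*} [MeasurableSpace α] {ν : Measure α}
    {f w : α → ℝ} (hf : AEMeasurable f ν) (hw : AEMeasurable w ν) (hw_pos : ∀ᵐ x ∂ν, 0 < w x)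
    (b η : ℝ) :
    ∫⁻ x, ENNReal.ofReal (w x ^ b * |f x|) ∂ν ≤
      (∫⁻ x, ENNReal.ofReal (f x ^ 2 * w x ^ η) ∂ν) ^ (1 / 2 : ℝ) *
        (∫⁻ x, ENNReal.ofReal (w x ^ (2 * b - η)) ∂ν) ^ (1 / 2 : ℝ) := by
  calc ∫⁻ x, ENNReal.ofReal (w x ^ b * |f x|) ∂ν
      = ∫⁻ x, ENNReal.ofReal (f x ^ 2 * w x ^ η) ^ (1 / 2 : ℝ) *
          ENNReal.ofReal (w x ^ (2 * b - η)) ^ (1 / 2 : ℝ) ∂ν :=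
        lintegral_congr_ae <| hw_pos.mono fun x hx =>
          (sqrt_ofReal_sq_mul_rpow_mul_sqrt_ofReal_rpow hx b η).symm
    _ ≤ _ := ENNReal.lintegral_mul_norm_pow_le (by fun_prop) (by fun_prop)
        (by norm_num) (by norm_num) (by norm_num)

/-- Let `μ` be a Borel measure on `(0,∞)`, `ξ` measurable, `a ∈ [0,1]` and `η ∈ ℝ`.
Then for every `s ≥ 0`,
`∫ (1 − e^{−xs}) |ξ(x)| dμ ≤ s^a (∫ ξ(x)² (1+x)^η dμ)^{1/2} (∫ (1+x)^{2a−η} dμ)^{1/2}`. -/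
theorem initial_curve_holder_bound (μ : Measure ℝ) (ξ : ℝ → ℝ) (hξ : Measurable ξ)
    (a η : ℝ) (ha0 : 0 ≤ a) (ha1 : a ≤ 1) (s : ℝ) (hs : 0 ≤ s) :
    ∫⁻ x in Set.Ioi 0, ENNReal.ofReal ((1 - Real.exp (-(x * s))) * |ξ x|) ∂μ ≤
      ENNReal.ofReal (s ^ a) *
        (∫⁻ x in Set.Ioi 0, ENNReal.ofReal (ξ x ^ 2 * (1 + x) ^ η) ∂μ) ^ ((1 : ℝ) / 2) *
        (∫⁻ x in Set.Ioi 0, ENNReal.ofReal ((1 + x) ^ (2 * a - η)) ∂μ) ^ ((1 : ℝ) / 2) := by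
  have hpointwise : ∀ x ∈ Set.Ioi (0 : ℝ), ENNReal.ofReal ((1 - exp (-(x * s))) * |ξ x|) ≤
      ENNReal.ofReal (s ^ a) * ENNReal.ofReal ((1 + x) ^ a * |ξ x|) := fun x hx => by
    rw [← ENNReal.ofReal_mul (by positivity), ← mul_assoc]
    exact ENNReal.ofReal_le_ofReal <| mul_le_mul_of_nonneg_right
      (one_sub_exp_neg_mul_le (le_of_lt hx) hs ha0 ha1) (abs_nonneg _)
  have hweight_pos : ∀ᵐ x ∂μ.restrict (Set.Ioi 0), 0 < 1 + x :=
    (ae_restrict_iff' measurableSet_Ioi).2 <| .of_forall fun x (hx : 0 < x) => by linarith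
  calc ∫⁻ x in Set.Ioi 0, ENNReal.ofReal ((1 - exp (-(x * s))) * |ξ x|) ∂μ
      ≤ ∫⁻ x in Set.Ioi 0, ENNReal.ofReal (s ^ a) * ENNReal.ofReal ((1 + x) ^ a * |ξ x|) ∂μ :=
        setLIntegral_mono' measurableSet_Ioi hpointwise
    _ = ENNReal.ofReal (s ^ a) * ∫⁻ x in Set.Ioi 0, ENNReal.ofReal ((1 + x) ^ a * |ξ x|) ∂μ :=
        lintegral_const_mul' _ _ ENNReal.ofReal_ne_top
    _ ≤ _ := by
        rw [mul_assoc]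
        gcongr
        exact lintegral_ofReal_rpow_mul_abs_le hξ.aemeasurable (by fun_prop) hweight_pos a η
end
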